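/- arXiv:2405.08532 — 10 statements merged into one kernel-verified Lean document; each statement's English description precedes it below -/
import Mathlib

section
/- For any sequence u over a finite alphabet A whose letters admit frequencies α = (α_i)_{i∈A}, the balance constant B_u and the discrepancy Δ_α(u) satisfy Δ_α(u) ≤ B_u ≤ 4·Δ_α(u), where B_u = max over letters i of the supremum of |w|_i − |w'|_i over pairs of factors w, w' of u of equal length, and Δ_α(u) = sup_n max_i |(number of occurrences of i in u_0…u_{n−1}) − n·α_i|. -/
/-!
Write `d(m) = |u_{[0,m)}|_i - m α_i`. Every factor count is a difference of two prefix counts,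
`|u_{[a,a+n)}|_i = d(a+n) - d(a) + n α_i`, so the difference of two factor counts of the same length
is a combination of four values of `d`, whence `B_u ≤ 4 Δ_α(u)`. Conversely, cutting the prefix of
length `k n` into `k` blocks of length `n` shows `| |u_{[0,kn)}|_i - k |u_{[0,n)}|_i | ≤ k B_u`;
dividing by `k` and letting `k → ∞` gives `|n α_i - |u_{[0,n)}|_i| ≤ B_u`.
-/

open scoped ENNReal

/-- Number of occurrences of the letter `i` in the factor `u_{[a, a+n)}`. -/
def nbOcc {A : Type*} [DecidableEq A] (u : ℕ → A) (i : A) (a n : ℕ) : ℕ :=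
  ((Finset.Ico a (a + n)).filter fun k => u k = i).card

/-- Letter discrepancy `Δ_α(u)` (possibly infinite). -/
noncomputable def discrepancy {A : Type*} [DecidableEq A] (u : ℕ → A) (α : A → ℝ) : ℝ≥0∞ :=
  ⨆ n : ℕ, ⨆ i : A, ENNReal.ofReal |(nbOcc u i 0 n : ℝ) - n * α i|

/-- Balance constant `B_u` (possibly infinite). -/
noncomputable def balanceConst {A : Type*} [DecidableEq A] (u : ℕ → A) : ℝ≥0∞ :=
  ⨆ i : A, ⨆ a : ℕ, ⨆ b : ℕ, ⨆ n : ℕ,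
    ENNReal.ofReal ((nbOcc u i a n : ℝ) - (nbOcc u i b n : ℝ))

open Filter Topology

section Counts

variable {A : Type*} [DecidableEq A] (u : ℕ → A) (i : A)

lemma nbOcc_add (a m n : ℕ) :
    nbOcc u i a (m + n) = nbOcc u i a m + nbOcc u i (a + m) n := by
  unfold nbOcc
  rw [← Finset.card_union_of_disjoint, ← Finset.filter_union, ← add_assoc,
    Finset.Ico_union_Ico_eq_Ico (by omega) (by omega)]
  exact Finset.disjoint_filter_filter (Finset.Ico_disjoint_Ico_consecutive a (a + m) (a + m + n))

lemma nbOcc_eq_sub (a n : ℕ) :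
    (nbOcc u i a n : ℝ) = nbOcc u i 0 (a + n) - nbOcc u i 0 a := by
  rw [nbOcc_add u i 0 a n, zero_add]
  push_cast
  ring

lemma abs_nbOcc_mul_sub_le {C : ℝ} (hC : ∀ b c m, (nbOcc u i b m : ℝ) - nbOcc u i c m ≤ C)
    (n k : ℕ) : |(nbOcc u i 0 (k * n) : ℝ) - k * nbOcc u i 0 n| ≤ k * C := by
  induction k with
  | zero => simp [nbOcc]
  | succ k ih =>
    have hblock : |(nbOcc u i (k * n) n : ℝ) - nbOcc u i 0 n| ≤ C :=
      abs_sub_le_iff.2 ⟨hC _ _ _, hC _ _ _⟩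
    rw [add_one_mul, nbOcc_add, zero_add]
    push_cast
    calc |(nbOcc u i 0 (k * n) : ℝ) + nbOcc u i (k * n) n - (k + 1) * nbOcc u i 0 n|
        = |((nbOcc u i 0 (k * n) : ℝ) - k * nbOcc u i 0 n)
            + ((nbOcc u i (k * n) n : ℝ) - nbOcc u i 0 n)| := by ring_nf
      _ ≤ k * C + C := (abs_add_le _ _).trans (add_le_add ih hblock)
      _ = (k + 1) * C := by ring

lemma tendsto_nbOcc_mul_div {a : ℝ}
    (hfreq : Tendsto (fun n : ℕ => (nbOcc u i 0 n : ℝ) / n) atTop (𝓝 a)) {n : ℕ} (hn : 0 < n) :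
    Tendsto (fun k : ℕ => (nbOcc u i 0 (k * n) : ℝ) / k) atTop (𝓝 (a * n)) := by
  have hsub := (hfreq.comp (tendsto_id.atTop_mul_const' hn)).mul_const (n : ℝ)
  refine hsub.congr fun k => ?_
  have hn' : (n : ℝ) ≠ 0 := by positivity
  simp only [Function.comp_apply, id, Nat.cast_mul]
  rw [div_mul_eq_mul_div, mul_div_mul_right _ _ hn']

lemma abs_nbOcc_sub_mul_le {a C : ℝ}
    (hfreq : Tendsto (fun n : ℕ => (nbOcc u i 0 n : ℝ) / n) atTop (𝓝 a))
    (hC : ∀ b c m, (nbOcc u i b m : ℝ) - nbOcc u i c m ≤ C) (n : ℕ) :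
    |(nbOcc u i 0 n : ℝ) - n * a| ≤ C := by
  rcases Nat.eq_zero_or_pos n with rfl | hn
  · simpa [nbOcc] using hC 0 0 0
  have hlim : Tendsto (fun k : ℕ => |(nbOcc u i 0 (k * n) : ℝ) / k - nbOcc u i 0 n|) atTop
      (𝓝 |a * n - nbOcc u i 0 n|) :=
    ((tendsto_nbOcc_mul_div u i hfreq hn).sub_const _).abs
  have hbound : ∀ᶠ k : ℕ in atTop, |(nbOcc u i 0 (k * n) : ℝ) / k - nbOcc u i 0 n| ≤ C := by
    filter_upwards [eventually_gt_atTop 0] with k hk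
    have hk' : (0 : ℝ) < k := by exact_mod_cast hk
    rw [div_sub' hk'.ne', abs_div, abs_of_pos hk', div_le_iff₀ hk']
    exact (abs_nbOcc_mul_sub_le u i hC n k).trans_eq (mul_comm _ _)
  rw [abs_sub_comm, mul_comm]
  exact le_of_tendsto hlim hbound

lemma nbOcc_sub_nbOcc_le {a C : ℝ} (hΔ : ∀ m, |(nbOcc u i 0 m : ℝ) - m * a| ≤ C) (b c n : ℕ) :
    (nbOcc u i b n : ℝ) - nbOcc u i c n ≤ 4 * C := by
  rw [nbOcc_eq_sub u i b, nbOcc_eq_sub u i c]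
  have h₁ := abs_le.1 (hΔ (b + n))
  have h₂ := abs_le.1 (hΔ b)
  have h₃ := abs_le.1 (hΔ (c + n))
  have h₄ := abs_le.1 (hΔ c)
  push_cast at h₁ h₃
  linarith [h₁.2, h₂.1, h₃.1, h₄.2]

end Counts

section Bounds

variable {A : Type*} [DecidableEq A] (u : ℕ → A)

lemma discrepancy_le_ofReal_iff (α : A → ℝ) {C : ℝ} (hC : 0 ≤ C) :
    discrepancy u α ≤ ENNReal.ofReal C ↔ ∀ n i, |(nbOcc u i 0 n : ℝ) - n * α i| ≤ C := by
  simp only [discrepancy, iSup_le_iff, ENNReal.ofReal_le_ofReal_iff hC]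

lemma balanceConst_le_ofReal_iff {C : ℝ} (hC : 0 ≤ C) :
    balanceConst u ≤ ENNReal.ofReal C ↔
      ∀ i a b n, (nbOcc u i a n : ℝ) - nbOcc u i b n ≤ C := by
  simp only [balanceConst, iSup_le_iff, ENNReal.ofReal_le_ofReal_iff hC]

end Bounds

theorem discrepancy_le_balance_le_four_mul_discrepancy_general
    {A : Type*} [DecidableEq A] (u : ℕ → A) (α : A → ℝ)
    (hfreq : ∀ i : A,
      Filter.Tendsto (fun n : ℕ => (nbOcc u i 0 n : ℝ) / n) Filter.atTop (nhds (α i))) :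
    discrepancy u α ≤ balanceConst u ∧ balanceConst u ≤ 4 * discrepancy u α := by
  constructor
  · rcases eq_or_ne (balanceConst u) ⊤ with hB | hB
    · exact hB ▸ le_top
    have hC : 0 ≤ (balanceConst u).toReal := ENNReal.toReal_nonneg
    have hbal := (balanceConst_le_ofReal_iff u hC).1 (ENNReal.ofReal_toReal hB).ge
    rw [← ENNReal.ofReal_toReal hB, discrepancy_le_ofReal_iff u α hC]
    exact fun n i => abs_nbOcc_sub_mul_le u i (hfreq i) (hbal i) n
  · rcases eq_or_ne (discrepancy u α) ⊤ with hΔ | hΔ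
    · simp [hΔ]
    have hC : 0 ≤ (discrepancy u α).toReal := ENNReal.toReal_nonneg
    have hdisc := (discrepancy_le_ofReal_iff u α hC).1 (ENNReal.ofReal_toReal hΔ).ge
    have h4 : 4 * discrepancy u α = ENNReal.ofReal (4 * (discrepancy u α).toReal) := by
      rw [ENNReal.ofReal_mul (by norm_num), ENNReal.ofReal_toReal hΔ, ENNReal.ofReal_ofNat]
    rw [h4, balanceConst_le_ofReal_iff u (by positivity)]
    exact fun i a b n => nbOcc_sub_nbOcc_le u i (fun m => hdisc m i) a b n

theorem discrepancy_le_balance_le_four_mul_discrepancy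
    {A : Type*} [Fintype A] [DecidableEq A] [Nonempty A] (u : ℕ → A) (α : A → ℝ)
    (hfreq : ∀ i : A,
      Filter.Tendsto (fun n : ℕ => (nbOcc u i 0 n : ℝ) / n) Filter.atTop (nhds (α i))) :
    discrepancy u α ≤ balanceConst u ∧ balanceConst u ≤ 4 * discrepancy u α :=
  discrepancy_le_balance_le_four_mul_discrepancy_general u α hfreq
end

section
/- Let α = (α_1, α_2) ∈ (0,1)² be a frequency vector (α_1 + α_2 = 1) with α_1 irrational, and let u be a sequence over a two-letter alphabet with letter frequency vector α such that Δ_α(u) ≤ 1/2. Then u is 1-balanced, i.e., for every letter a and every pair of factors w, w' of u of equal length, ||w|_a − |w'|_a| ≤ 1. -/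
/-!
Write `c m` for the number of occurrences of `a` in the prefix of length `m`. Since `α a` is
irrational, `m * α a` is never at distance exactly `1/2` from an integer once `m ≠ 0`, so the
discrepancy bound is strict: `|c m - m α a| < 1/2`. A window count `c (p + q) - c p` is
therefore within distance `< 1` of `q α a`, and two window counts of the same length, being
integers at distance `< 2`, differ by at most `1`.
-/

open Finset

variable {β : Type*} [DecidableEq β]

def prefixCount (u : ℕ → β) (a : β) (m : ℕ) : ℕ := #{t ∈ range m | u t = a}

theorem prefixCount_add_card_filter_Ico (u : ℕ → β) (a : β) (p q : ℕ) :
    prefixCount u a p + #{t ∈ Ico p (p + q) | u t = a} = prefixCount u a (p + q) := by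
  simp only [prefixCount, card_filter]
  exact sum_range_add_sum_Ico _ (Nat.le_add_right p q)

theorem Irrational.abs_intCast_sub_ne_half {y : ℝ} (hy : Irrational y) (c : ℤ) :
    |c - y| ≠ 1 / 2 := by
  intro h
  rcases abs_eq (by norm_num : (0 : ℝ) ≤ 1 / 2) |>.mp h with h | h
  · exact hy ⟨c - 1 / 2, by push_cast; linarith⟩
  · exact hy ⟨c + 1 / 2, by push_cast; linarith⟩

theorem abs_sub_mul_lt_half_of_le_half {x : ℝ} (hx : Irrational x) {c : ℕ → ℤ}
    (hc0 : c 0 = 0) (hc : ∀ m : ℕ, |c m - m * x| ≤ 1 / 2) (m : ℕ) :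
    |c m - m * x| < 1 / 2 := by
  rcases Nat.eq_zero_or_pos m with rfl | hm
  · simp [hc0]
  · exact (hc m).lt_of_ne <| (hx.natCast_mul hm.ne').abs_intCast_sub_ne_half (c m)

theorem abs_sub_sub_le_one_of_abs_sub_mul_lt_half {x : ℝ} {c : ℕ → ℤ}
    (hc : ∀ m : ℕ, |c m - m * x| < 1 / 2) (j k n : ℕ) :
    |(c (j + n) - c j) - (c (k + n) - c k)| ≤ 1 := by
  have window : ∀ p, |((c (p + n) - c p : ℤ) : ℝ) - n * x| < 1 := fun p => by
    have h₁ := abs_lt.mp (hc (p + n))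
    have h₂ := abs_lt.mp (hc p)
    push_cast at h₁ h₂ ⊢
    rw [abs_lt]; constructor <;> linarith
  have hlt : |(((c (j + n) - c j) - (c (k + n) - c k) : ℤ) : ℝ)| < 2 := by
    have h₁ := abs_lt.mp (window j)
    have h₂ := abs_lt.mp (window k)
    push_cast at h₁ h₂ ⊢
    rw [abs_lt]; constructor <;> linarith
  rw [← Int.cast_abs] at hlt
  have : |(c (j + n) - c j) - (c (k + n) - c k)| < 2 := by exact_mod_cast hlt
  omega

theorem Fin.irrational_apply_of_sum_eq_one {α : Fin 2 → ℝ} (hsum : ∑ i, α i = 1)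
    (hirr : Irrational (α 0)) (a : Fin 2) : Irrational (α a) := by
  fin_cases a
  · exact hirr
  · have h : α 1 = (1 : ℤ) - α 0 := by
      rw [Fin.sum_univ_two] at hsum; push_cast; linarith
    simpa [h] using hirr.intCast_sub 1

theorem fairly_distributed_two_letters_is_one_balanced_general
    (α : Fin 2 → ℝ) (hsum : ∑ i, α i = 1)
    (hirr : Irrational (α 0)) (u : ℕ → Fin 2)
    (hdisc : ∀ (n : ℕ) (i : Fin 2),
      |(((Finset.range n).filter fun k => u k = i).card : ℝ) - n * α i| ≤ 1/2) :
    ∀ (a : Fin 2) (j k n : ℕ),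
      |((((Finset.Ico j (j + n)).filter fun t => u t = a).card : ℤ)
        - (((Finset.Ico k (k + n)).filter fun t => u t = a).card : ℤ))| ≤ 1 := by
  intro a j k n
  have hstrict := abs_sub_mul_lt_half_of_le_half (Fin.irrational_apply_of_sum_eq_one hsum hirr a)
    (c := fun m => prefixCount u a m) (by simp [prefixCount]) (fun m => by exact_mod_cast hdisc m a)
  have hj := prefixCount_add_card_filter_Ico u a j n
  have hk := prefixCount_add_card_filter_Ico u a k n
  have := abs_sub_sub_le_one_of_abs_sub_mul_lt_half hstrict j k n
  simp only [prefixCount] at hj hk this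
  convert this using 3 <;> omega

theorem fairly_distributed_two_letters_is_one_balanced
    (α : Fin 2 → ℝ) (hα : ∀ i, α i ∈ Set.Ioo (0:ℝ) 1) (hsum : ∑ i, α i = 1)
    (hirr : Irrational (α 0)) (u : ℕ → Fin 2)
    (hfreq : ∀ i : Fin 2,
      Filter.Tendsto
        (fun n : ℕ => (((Finset.range n).filter fun k => u k = i).card : ℝ) / n)
        Filter.atTop (nhds (α i)))
    (hdisc : ∀ (n : ℕ) (i : Fin 2),
      |(((Finset.range n).filter fun k => u k = i).card : ℝ) - n * α i| ≤ 1/2) :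
    ∀ (a : Fin 2) (j k n : ℕ),
      |((((Finset.Ico j (j + n)).filter fun t => u t = a).card : ℤ)
        - (((Finset.Ico k (k + n)).filter fun t => u t = a).card : ℤ))| ≤ 1 :=
  fairly_distributed_two_letters_is_one_balanced_general α hsum hirr u hdisc
end

section
/- Let α ∈ (0,1)^d be a frequency vector, π_α : ℝ^d → 1^⊥ the projection along ℝα onto the hyperplane 1^⊥ = {x : Σ x_i = 0} (so π_α(e_i) = e_i − α), and F_i = {x ∈ [0,1]^d : x_i = 1}. Then the union of the projections π_α(F_i) for i = 1,…,d equals π_α([0,1]^d). -/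
/-- Projection onto `1^⊥` along `ℝα` (for a frequency vector `α`): `π_α(x) = x - (Σ x_i) • α`,
so that `π_α(e_i) = e_i - α`. -/
noncomputable def piAlpha {d : ℕ} (α : Fin d → ℝ) (x : Fin d → ℝ) : Fin d → ℝ :=
  x - (∑ j, x j) • α

/-- Upper face of the unit cube in direction `i`. -/
def upperFace (d : ℕ) (i : Fin d) : Set (Fin d → ℝ) :=
  {x | x ∈ Set.Icc (0 : Fin d → ℝ) 1 ∧ x i = 1}

/-!
Pushing a point `x` of the cube along the positive direction `α` does not change its
projection, and the first time `t = minᵢ (1 - xᵢ) / αᵢ` at which a coordinate reaches `1`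
the point `x + t • α` lies on an upper face.
-/

open Set Finset

lemma piAlpha_add_smul {d : ℕ} {α : Fin d → ℝ} (hsum : ∑ i, α i = 1) (x : Fin d → ℝ) (t : ℝ) :
    piAlpha α (x + t • α) = piAlpha α x := by
  ext j
  simp only [piAlpha, Pi.sub_apply, Pi.add_apply, Pi.smul_apply, smul_eq_mul, sum_add_distrib,
    ← mul_sum, hsum]
  ring

lemma exists_nonneg_add_smul_le_one_eq_one {ι : Type*} [Fintype ι] [Nonempty ι] {α x : ι → ℝ}
    (hα : ∀ i, 0 < α i) (hx : x ≤ 1) :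
    ∃ i, ∃ t : ℝ, 0 ≤ t ∧ x + t • α ≤ 1 ∧ (x + t • α) i = 1 := by
  obtain ⟨i, -, hmin⟩ := exists_min_image univ (fun j => (1 - x j) / α j) univ_nonempty
  refine ⟨i, (1 - x i) / α i, div_nonneg (sub_nonneg.2 (hx i)) (hα i).le, fun j => ?_, ?_⟩
  · have := (le_div_iff₀ (hα j)).1 (hmin j (mem_univ j))
    simp only [Pi.add_apply, Pi.smul_apply, smul_eq_mul, Pi.one_apply]
    linarith
  · simp [div_mul_cancel₀ _ (hα i).ne']

theorem union_proj_upperFaces_eq_proj_cube_general {d : ℕ}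
    (α : Fin d → ℝ) (hα : ∀ i, α i ∈ Set.Ioo (0:ℝ) 1) (hsum : ∑ i, α i = 1) :
    (⋃ i : Fin d, piAlpha α '' upperFace d i)
      = piAlpha α '' Set.Icc (0 : Fin d → ℝ) 1 := by
  have : Nonempty (Fin d) := by
    by_contra h
    rw [not_nonempty_iff] at h
    simp at hsum
  refine Subset.antisymm (iUnion_subset fun i => image_mono fun x hx => hx.1) ?_
  rintro _ ⟨x, hx, rfl⟩
  obtain ⟨i, t, ht, hle, hi⟩ := exists_nonneg_add_smul_le_one_eq_one (fun i => (hα i).1) hx.2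
  have hnonneg : 0 ≤ x + t • α := le_add_of_le_of_nonneg hx.1 (smul_nonneg ht fun j => (hα j).1.le)
  exact mem_iUnion.2 ⟨i, x + t • α, ⟨⟨hnonneg, hle⟩, hi⟩, piAlpha_add_smul hsum x t⟩

theorem union_proj_upperFaces_eq_proj_cube {d : ℕ} (hd : 2 ≤ d)
    (α : Fin d → ℝ) (hα : ∀ i, α i ∈ Set.Ioo (0:ℝ) 1) (hsum : ∑ i, α i = 1) :
    (⋃ i : Fin d, piAlpha α '' upperFace d i)
      = piAlpha α '' Set.Icc (0 : Fin d → ℝ) 1 :=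
  union_proj_upperFaces_eq_proj_cube_general α hα hsum
end

section
/- Let α ∈ (0,1)^d be a frequency vector and π_α the projection along ℝα onto 1^⊥. For j ≠ k, the intersection π_α(F_j) ∩ π_α(F_k) equals { Σ_{i=1}^d x_i π_α(e_i) : x_j = x_k = 1, x_i ∈ [0,1] for i ∉ {j,k} }; in particular it is contained in an affine subspace of dimension d − 2. -/
theorem Submodule.finrank_map_of_disjoint_ker {K V W : Type*} [DivisionRing K] [AddCommGroup V]
    [Module K V] [AddCommGroup W] [Module K W] {f : V →ₗ[K] W} {p : Submodule K V}
    (h : Disjoint p (LinearMap.ker f)) :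
    Module.finrank K (p.map f) = Module.finrank K p := by
  rw [← LinearMap.range_domRestrict,
    LinearMap.finrank_range_of_inj (LinearMap.injective_domRestrict_iff.mpr h)]

theorem finrank_ker_proj_prod_proj {K : Type*} [Field K] {d : ℕ} {j k : Fin d} (hjk : j ≠ k) :
    Module.finrank K (LinearMap.ker ((LinearMap.proj j).prod (LinearMap.proj k) :
      (Fin d → K) →ₗ[K] K × K)) = d - 2 := by
  have hsurj : LinearMap.range ((LinearMap.proj j).prod (LinearMap.proj k) :
      (Fin d → K) →ₗ[K] K × K) = ⊤ := by
    refine LinearMap.range_eq_top.mpr fun ⟨a, b⟩ => ⟨Pi.single j a + Pi.single k b, ?_⟩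
    simp [hjk, hjk.symm]
  have := LinearMap.finrank_range_add_finrank_ker
    ((LinearMap.proj j).prod (LinearMap.proj k) : (Fin d → K) →ₗ[K] K × K)
  rw [hsurj, finrank_top, Module.finrank_prod, Module.finrank_self, Module.finrank_fin_fun] at this
  omega

section

variable {d : ℕ}

theorem piAlpha_eq_iff {α x y : Fin d → ℝ} :
    piAlpha α x = piAlpha α y ↔ x = y + (∑ i, x i - ∑ i, y i) • α := by
  simp only [piAlpha, sub_smul]
  constructor <;> intro h <;> linear_combination h

theorem eq_of_piAlpha_eq_of_mem_upperFace {α x y : Fin d → ℝ} {j k : Fin d}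
    (hj : 0 < α j) (hk : 0 < α k) (hx : x ∈ upperFace d j) (hy : y ∈ upperFace d k)
    (h : piAlpha α x = piAlpha α y) : x = y := by
  obtain ⟨⟨-, hx1⟩, hxj⟩ := hx
  obtain ⟨⟨-, hy1⟩, hyk⟩ := hy
  obtain ⟨c, hxy⟩ : ∃ c : ℝ, x = y + c • α := ⟨_, piAlpha_eq_iff.mp h⟩
  have hcj : x j = y j + c * α j := by simpa using congrFun hxy j
  have hck : x k = y k + c * α k := by simpa using congrFun hxy k
  have hyj : y j ≤ 1 := hy1 j
  have hxk : x k ≤ 1 := hx1 k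
  have hc_nonneg : 0 ≤ c := nonneg_of_mul_nonneg_left (by linarith) hj
  have hc_nonpos : c ≤ 0 := nonpos_of_mul_nonpos_left (by linarith) hk
  rw [hxy, le_antisymm hc_nonpos hc_nonneg, zero_smul, add_zero]

theorem image_piAlpha_upperFace_inter {α : Fin d → ℝ} {j k : Fin d} (hj : 0 < α j)
    (hk : 0 < α k) :
    piAlpha α '' upperFace d j ∩ piAlpha α '' upperFace d k
      = piAlpha α '' (upperFace d j ∩ upperFace d k) :=
  (Set.image_inter_on fun _ hx _ hy h => eq_of_piAlpha_eq_of_mem_upperFace hk hj hx hy h).symm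

noncomputable def piAlphaₗ (α : Fin d → ℝ) : (Fin d → ℝ) →ₗ[ℝ] Fin d → ℝ where
  toFun := piAlpha α
  map_add' x y := by
    simp only [piAlpha, Pi.add_apply, Finset.sum_add_distrib, add_smul]
    abel
  map_smul' c x := by
    simp only [piAlpha, Pi.smul_apply, smul_eq_mul, ← Finset.mul_sum, mul_smul, RingHom.id_apply,
      smul_sub]

theorem disjoint_ker_proj_ker_piAlphaₗ {α : Fin d → ℝ} {j : Fin d} (hj : α j ≠ 0) :
    Disjoint (LinearMap.ker (LinearMap.proj j : (Fin d → ℝ) →ₗ[ℝ] ℝ))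
      (LinearMap.ker (piAlphaₗ α)) := by
  refine Submodule.disjoint_def.mpr fun v hvj hv => ?_
  have hv' : v = (∑ i, v i) • α := by
    simpa using piAlpha_eq_iff.mp (hv.trans (map_zero (piAlphaₗ α)).symm)
  have hsum : ∑ i, v i = 0 := by
    have hvj' : v j = (∑ i, v i) * α j := by simpa using congrFun hv' j
    simp only [LinearMap.mem_ker, LinearMap.proj_apply] at hvj
    exact (mul_eq_zero.mp (hvj' ▸ hvj)).resolve_right hj
  rwa [hsum, zero_smul] at hv'

end

theorem proj_upperFaces_inter_general {d : ℕ}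
    (α : Fin d → ℝ) (hα : ∀ i, α i ∈ Set.Ioo (0:ℝ) 1)
    (j k : Fin d) (hjk : j ≠ k) :
    (piAlpha α '' upperFace d j) ∩ (piAlpha α '' upperFace d k)
      = piAlpha α '' {x | x ∈ Set.Icc (0 : Fin d → ℝ) 1 ∧ x j = 1 ∧ x k = 1}
    ∧ ∃ W : AffineSubspace ℝ (Fin d → ℝ),
        Module.finrank ℝ W.direction = d - 2 ∧
        (piAlpha α '' upperFace d j) ∩ (piAlpha α '' upperFace d k) ⊆ (W : Set (Fin d → ℝ)) := by
  have hfaces : {x | x ∈ Set.Icc (0 : Fin d → ℝ) 1 ∧ x j = 1 ∧ x k = 1}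
      = upperFace d j ∩ upperFace d k := by
    ext x
    simp only [upperFace, Set.mem_ofPred_eq, Set.mem_inter_iff]
    tauto
  have hinter := image_piAlpha_upperFace_inter (hα j).1 (hα k).1
  let V := LinearMap.ker ((LinearMap.proj j).prod (LinearMap.proj k) : (Fin d → ℝ) →ₗ[ℝ] ℝ × ℝ)
  refine ⟨hfaces ▸ hinter, (AffineSubspace.mk' 1 V).map (piAlphaₗ α).toAffineMap, ?_, ?_⟩
  · have hV : V ≤ LinearMap.ker (LinearMap.proj j) := fun v hv => congrArg Prod.fst hv
    have hdisj := (disjoint_ker_proj_ker_piAlphaₗ (hα j).1.ne').mono_left hV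
    rw [AffineSubspace.map_direction, AffineSubspace.direction_mk', LinearMap.toAffineMap_linear,
      Submodule.finrank_map_of_disjoint_ker hdisj, finrank_ker_proj_prod_proj hjk]
  · rw [hinter, AffineSubspace.coe_map]
    refine Set.image_mono fun x ⟨⟨_, hxj⟩, ⟨_, hxk⟩⟩ => ?_
    simp [V, AffineSubspace.mem_mk', hxj, hxk]

theorem proj_upperFaces_inter {d : ℕ} (hd : 2 ≤ d)
    (α : Fin d → ℝ) (hα : ∀ i, α i ∈ Set.Ioo (0:ℝ) 1) (hsum : ∑ i, α i = 1)
    (j k : Fin d) (hjk : j ≠ k) :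
    (piAlpha α '' upperFace d j) ∩ (piAlpha α '' upperFace d k)
      = piAlpha α '' {x | x ∈ Set.Icc (0 : Fin d → ℝ) 1 ∧ x j = 1 ∧ x k = 1}
    ∧ ∃ W : AffineSubspace ℝ (Fin d → ℝ),
        Module.finrank ℝ W.direction = d - 2 ∧
        (piAlpha α '' upperFace d j) ∩ (piAlpha α '' upperFace d k) ⊆ (W : Set (Fin d → ℝ)) :=
  proj_upperFaces_inter_general α hα j k hjk
end

section
/- If H_1, …, H_n are n affine hyperplanes in ℝ^d, then the complement ℝ^d \ (H_1 ∪ … ∪ H_n) has at most C(n,0) + C(n,1) + … + C(n,d) connected components, where C(n,k) are binomial coefficients. -/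
/-!
Each connected component of the complement is an open cell `{x | ∀ i, c i < f i x ↔ σ i}`
(off the hyperplanes): cells are convex, and the sign vector is locally constant on the
complement. So it suffices to count the sign vectors `σ` whose cell is nonempty. Deleting the
last hyperplane `H`, a sign vector of the smaller arrangement has at most two extensions, and it
has two only if its cell meets `H`, by convexity; it is then a sign vector of the arrangement
restricted to `H`, which has one dimension less. This gives the recurrence
`R(n + 1, d) ≤ R(n, d) + R(n, d - 1)`, which is Pascal's rule for `∑_{k ≤ d} C(n, k)`.
-/

open Set Module

lemma sum_range_choose_succ (n e : ℕ) :
    ∑ k ∈ Finset.range (e + 2), (n + 1).choose k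
      = ∑ k ∈ Finset.range (e + 2), n.choose k + ∑ k ∈ Finset.range (e + 1), n.choose k := by
  rw [Finset.sum_range_succ' _ (e + 1), Finset.sum_range_succ' (fun k => n.choose k) (e + 1)]
  simp only [Nat.choose_succ_succ, Finset.sum_add_distrib, Nat.choose_zero_right]
  ring

lemma sum_range_choose_le_sum_range_choose_succ (n e : ℕ) :
    ∑ k ∈ Finset.range e, n.choose k ≤ ∑ k ∈ Finset.range e, (n + 1).choose k :=
  Finset.sum_le_sum fun k _ => Nat.choose_le_choose k n.le_succ

lemma ncard_le_ncard_snoc_or_add_ncard_snoc_and {n : ℕ} (P : Set (Fin (n + 1) → Bool)) :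
    P.ncard ≤ {τ : Fin n → Bool | Fin.snoc τ true ∈ P ∨ Fin.snoc τ false ∈ P}.ncard
      + {τ : Fin n → Bool | Fin.snoc τ true ∈ P ∧ Fin.snoc τ false ∈ P}.ncard := by
  let A (b : Bool) : Set (Fin n → Bool) := {τ | Fin.snoc τ b ∈ P}
  have hP : P = (Fin.snoc · true) '' A true ∪ (Fin.snoc · false) '' A false := by
    ext σ
    refine ⟨fun hσ => ?_, by rintro (⟨τ, hτ, rfl⟩ | ⟨τ, hτ, rfl⟩) <;> assumption⟩
    rw [← Fin.snoc_init_self σ] at hσ ⊢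
    cases h : σ (Fin.last n) <;> rw [h] at hσ
    · exact .inr ⟨_, hσ, rfl⟩
    · exact .inl ⟨_, hσ, rfl⟩
  calc P.ncard ≤ (A true).ncard + (A false).ncard := by
        rw [hP]
        exact (ncard_union_le _ _).trans (add_le_add (ncard_image_le (toFinite _))
          (ncard_image_le (toFinite _)))
    _ = _ := (ncard_union_add_ncard_inter _ _).symm

lemma Convex.exists_mem_apply_eq {E : Type*} [AddCommGroup E] [Module ℝ E] {s : Set E}
    (hs : Convex ℝ s) (g : E →ₗ[ℝ] ℝ) {x y : E} (hx : x ∈ s) (hy : y ∈ s) {a : ℝ}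
    (hxa : g x ≤ a) (hay : a ≤ g y) : ∃ z ∈ s, g z = a :=
  (hs.linear_image g).ordConnected.out (mem_image_of_mem g hx) (mem_image_of_mem g hy) ⟨hxa, hay⟩

section SignCell

variable {E : Type*} [AddCommGroup E] [Module ℝ E] {n : ℕ}

def signCell (f : Fin n → E →ₗ[ℝ] ℝ) (c : Fin n → ℝ) (σ : Fin n → Bool) : Set E :=
  {x | ∀ i, if σ i then c i < f i x else f i x < c i}

def signPatterns (f : Fin n → E →ₗ[ℝ] ℝ) (c : Fin n → ℝ) : Set (Fin n → Bool) :=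
  {σ | (signCell f c σ).Nonempty}

variable {f : Fin n → E →ₗ[ℝ] ℝ} {c : Fin n → ℝ}

lemma convex_signCell (σ : Fin n → Bool) : Convex ℝ (signCell f c σ) := by
  have : signCell f c σ = ⋂ i, {x | if σ i then c i < f i x else f i x < c i} := by
    ext; simp [signCell]
  rw [this]
  refine convex_iInter fun i => ?_
  cases σ i
  · exact convex_halfSpace_lt (f i).isLinear _
  · exact convex_halfSpace_gt (f i).isLinear _

lemma signCell_subset_compl (σ : Fin n → Bool) :
    signCell f c σ ⊆ {x | ∀ i, f i x ≠ c i} := by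
  intro x hx i
  have := hx i
  split_ifs at this
  exacts [this.ne', this.ne]

lemma mem_signCell_decide {x : E} (hx : ∀ i, f i x ≠ c i) :
    x ∈ signCell f c (fun i => decide (c i < f i x)) := by
  intro i
  by_cases h : c i < f i x
  · simp [h]
  · simpa [h] using lt_of_le_of_ne (not_lt.1 h) (hx i)

lemma signCell_snoc {f : Fin (n + 1) → E →ₗ[ℝ] ℝ} {c : Fin (n + 1) → ℝ} (τ : Fin n → Bool)
    (b : Bool) : signCell f c (Fin.snoc τ b) = signCell (Fin.init f) (Fin.init c) τ ∩
      {x | if b then c (Fin.last n) < f (Fin.last n) x else f (Fin.last n) x < c (Fin.last n)} := by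
  ext x
  simp [signCell, Fin.forall_fin_succ', Fin.init, and_comm]

lemma snoc_mem_signPatterns {f : Fin (n + 1) → E →ₗ[ℝ] ℝ} {c : Fin (n + 1) → ℝ}
    {τ : Fin n → Bool} {b : Bool} (h : Fin.snoc τ b ∈ signPatterns f c) :
    τ ∈ signPatterns (Fin.init f) (Fin.init c) := by
  obtain ⟨x, hx⟩ := h
  rw [signCell_snoc] at hx
  exact ⟨x, hx.1⟩

lemma exists_mem_signCell_of_snoc_mem_signPatterns {f : Fin (n + 1) → E →ₗ[ℝ] ℝ}
    {c : Fin (n + 1) → ℝ} {τ : Fin n → Bool} (htrue : Fin.snoc τ true ∈ signPatterns f c)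
    (hfalse : Fin.snoc τ false ∈ signPatterns f c) :
    ∃ z ∈ signCell (Fin.init f) (Fin.init c) τ, f (Fin.last n) z = c (Fin.last n) := by
  obtain ⟨x, hx⟩ := htrue
  obtain ⟨y, hy⟩ := hfalse
  rw [signCell_snoc] at hx hy
  exact (convex_signCell τ).exists_mem_apply_eq _ hy.1 hx.1 hy.2.le hx.2.le

lemma exists_signPatterns_superset_of_hyperplane (f : Fin n → E →ₗ[ℝ] ℝ) (c : Fin n → ℝ)
    {g : E →ₗ[ℝ] ℝ} (hg : g ≠ 0) (a : ℝ) :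
    ∃ (f' : Fin n → LinearMap.ker g →ₗ[ℝ] ℝ) (c' : Fin n → ℝ),
      {τ | ∃ z ∈ signCell f c τ, g z = a} ⊆ signPatterns f' c' := by
  obtain ⟨x₀, hx₀⟩ := (g : Module.Dual ℝ E).surjective hg a
  refine ⟨fun i => (f i).domRestrict _, fun i => c i - f i x₀, ?_⟩
  rintro τ ⟨z, hz, hza⟩
  refine ⟨⟨z - x₀, by simp [hza, hx₀]⟩, fun i => ?_⟩
  have := hz i
  simp only [LinearMap.domRestrict_apply, map_sub]
  split_ifs at this ⊢ <;> linarith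

theorem ncard_signPatterns_le [FiniteDimensional ℝ E] (f : Fin n → E →ₗ[ℝ] ℝ)
    (c : Fin n → ℝ) :
    (signPatterns f c).ncard ≤ ∑ k ∈ Finset.range (finrank ℝ E + 1), n.choose k := by
  induction n generalizing E with
  | zero =>
    calc (signPatterns f c).ncard ≤ 1 := ncard_le_one_of_subsingleton _
      _ ≤ _ := by rw [Finset.sum_range_succ']; simp
  | succ n ih =>
    refine (ncard_le_ncard_snoc_or_add_ncard_snoc_and _).trans ?_
    have hor : {τ | Fin.snoc τ true ∈ signPatterns f c ∨ Fin.snoc τ false ∈ signPatterns f c}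
        ⊆ signPatterns (Fin.init f) (Fin.init c) := by
      rintro τ (h | h) <;> exact snoc_mem_signPatterns h
    by_cases hg : f (Fin.last n) = 0
    · have hempty : {τ | Fin.snoc τ true ∈ signPatterns f c ∧
          Fin.snoc τ false ∈ signPatterns f c} = ∅ := by
        refine eq_empty_of_forall_notMem fun τ ⟨⟨x, hx⟩, ⟨y, hy⟩⟩ => ?_
        simp only [signCell_snoc, ↓reduceIte, hg, LinearMap.zero_apply, mem_inter_iff,
          mem_ofPred_eq, Bool.false_eq_true] at hx hy
        linarith [hx.2, hy.2]
      rw [hempty, ncard_empty, add_zero]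
      exact (ncard_le_ncard hor (toFinite _)).trans
        ((ih _ _).trans (sum_range_choose_le_sum_range_choose_succ _ _))
    · have hand : {τ | Fin.snoc τ true ∈ signPatterns f c ∧ Fin.snoc τ false ∈ signPatterns f c}
          ⊆ {τ | ∃ z ∈ signCell (Fin.init f) (Fin.init c) τ, f (Fin.last n) z = c (Fin.last n)} :=
        fun τ h => exists_mem_signCell_of_snoc_mem_signPatterns h.1 h.2
      obtain ⟨f', c', hsub⟩ :=
        exists_signPatterns_superset_of_hyperplane (Fin.init f) (Fin.init c) hg (c (Fin.last n))
      have hdim := Module.Dual.finrank_ker_add_one_of_ne_zero hg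
      calc _ ≤ (signPatterns (Fin.init f) (Fin.init c)).ncard + (signPatterns f' c').ncard :=
            add_le_add (ncard_le_ncard hor (toFinite _))
              (ncard_le_ncard (hand.trans hsub) (toFinite _))
        _ ≤ _ := add_le_add (ih _ _) (ih _ _)
        _ = _ := by rw [← hdim]; exact (sum_range_choose_succ _ _).symm

end SignCell

lemma connectedComponentIn_eq_signCell {E : Type*} [AddCommGroup E] [Module ℝ E]
    [TopologicalSpace E] [IsTopologicalAddGroup E] [ContinuousSMul ℝ E] [T2Space E]
    [FiniteDimensional ℝ E] {n : ℕ} {f : Fin n → E →ₗ[ℝ] ℝ} {c : Fin n → ℝ} {x : E}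
    (hx : x ∈ {y | ∀ i, f i y ≠ c i}) :
    connectedComponentIn {y | ∀ i, f i y ≠ c i} x
      = signCell f c (fun i => decide (c i < f i x)) := by
  refine subset_antisymm (fun y hy i => ?_) ((convex_signCell _).isPreconnected
    |>.subset_connectedComponentIn (mem_signCell_decide hx) (signCell_subset_compl _))
  have hside := (isPreconnected_connectedComponentIn (F := {y | ∀ i, f i y ≠ c i}) (x := x)
    |>.mapsTo_Ioi_or_Iio (map_continuous (f i)).continuousOn
      fun z hz => connectedComponentIn_subset _ _ hz i)
  have hxC := mem_connectedComponentIn hx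
  rcases hside with h | h
  · simpa [show c i < f i x from h hxC] using h hy
  · simpa [not_lt.2 (mem_Iio.1 (h hxC)).le] using h hy

theorem components_of_hyperplane_arrangement_complement_general {d n : ℕ}
    (f : Fin n → ((Fin d → ℝ) →ₗ[ℝ] ℝ)) (c : Fin n → ℝ) :
    {Cc : Set (Fin d → ℝ) | ∃ x ∈ {y : Fin d → ℝ | ∀ i, f i y ≠ c i},
        Cc = connectedComponentIn {y : Fin d → ℝ | ∀ i, f i y ≠ c i} x}.Finite
    ∧ {Cc : Set (Fin d → ℝ) | ∃ x ∈ {y : Fin d → ℝ | ∀ i, f i y ≠ c i},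
        Cc = connectedComponentIn {y : Fin d → ℝ | ∀ i, f i y ≠ c i} x}.ncard
      ≤ ∑ k ∈ Finset.range (d + 1), n.choose k := by
  have hsub : {Cc : Set (Fin d → ℝ) | ∃ x ∈ {y : Fin d → ℝ | ∀ i, f i y ≠ c i},
      Cc = connectedComponentIn {y : Fin d → ℝ | ∀ i, f i y ≠ c i} x}
        ⊆ signCell f c '' signPatterns f c := by
    rintro _ ⟨x, hx, rfl⟩
    exact ⟨_, ⟨x, mem_signCell_decide hx⟩, (connectedComponentIn_eq_signCell hx).symm⟩
  have hfin : (signCell f c '' signPatterns f c).Finite := (toFinite _).image _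
  refine ⟨hfin.subset hsub, ?_⟩
  calc _ ≤ (signCell f c '' signPatterns f c).ncard := ncard_le_ncard hsub hfin
    _ ≤ (signPatterns f c).ncard := ncard_image_le (toFinite _)
    _ ≤ _ := by simpa using ncard_signPatterns_le f c

theorem components_of_hyperplane_arrangement_complement {d n : ℕ}
    (f : Fin n → ((Fin d → ℝ) →ₗ[ℝ] ℝ)) (c : Fin n → ℝ) (hf : ∀ i, f i ≠ 0) :
    {Cc : Set (Fin d → ℝ) | ∃ x ∈ {y : Fin d → ℝ | ∀ i, f i y ≠ c i},
        Cc = connectedComponentIn {y : Fin d → ℝ | ∀ i, f i y ≠ c i} x}.Finite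
    ∧ {Cc : Set (Fin d → ℝ) | ∃ x ∈ {y : Fin d → ℝ | ∀ i, f i y ≠ c i},
        Cc = connectedComponentIn {y : Fin d → ℝ | ∀ i, f i y ≠ c i} x}.ncard
      ≤ ∑ k ∈ Finset.range (d + 1), n.choose k :=
  components_of_hyperplane_arrangement_complement_general f c
end

section
/- Let α ∈ ℝ^d be such that the coordinates of (1, α) ∈ ℝ^{d+1} are rationally independent. Let H ⊂ ℝ^d be an affine hyperplane and K ⊂ ℝ^d a bounded set. Then there exists a positive integer Q, depending only on K and the direction (translation vector space) of H, such that for every a ∈ ℝ^d, the set of integers q with a + qα ∈ (K ∩ H) + ℤ^d has cardinality at most Q. -/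
/-!
If `q` and `q'` both hit, with integer vectors `m` and `m'`, then `(q - q') α - (m - m')` lies in
`ker f` and has norm at most the diameter of `K`; so it suffices that only finitely many integer
points `(p, n) ∈ ℤ^{d+1}` (with `p` as coordinate `0`) have `Φ (p, n) := p α - n` in `ker f`
and of bounded norm.
These points span a real subspace `W` of the proper subspace `ker (f ∘ Φ)`. The rational points
of a proper subspace lie in the kernel of a nonzero rational functional, so rational
independence of `(1, α)` gives `(1, α) ∉ W`. As `ker Φ = ℝ (1, α)`, the map `Φ` is injective on
the finite-dimensional space `W`, hence bounded below there, which confines the points to a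
bounded set.
-/

open Filter Submodule

section

variable {ι : Type*} [Fintype ι]

theorem exists_rat_functional_of_ne_top {W : Submodule ℝ (ι → ℝ)} (hW : W ≠ ⊤) :
    ∃ c : ι → ℚ, c ≠ 0 ∧
      ∀ z : ι → ℤ, (fun i => (z i : ℝ)) ∈ W → ∑ i, (c i : ℝ) * z i = 0 := by
  classical
  let castQ := LinearMap.compLeft (Algebra.linearMap ℚ ℝ) ι
  have castQ_apply (x : ι → ℚ) : castQ x = fun i => (x i : ℝ) := rfl
  let U := (W.restrictScalars ℚ).comap castQ
  have hU : U < ⊤ := by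
    refine lt_top_iff_ne_top.mpr fun hU => hW <| eq_top_iff.mpr ?_
    rw [← (Pi.basisFun ℝ ι).span_eq, span_le]
    rintro _ ⟨i, rfl⟩
    have hi : castQ (Pi.single i 1) = Pi.basisFun ℝ ι i := by
      ext j
      by_cases h : j = i <;> simp [castQ_apply, h]
    exact hi ▸ (hU ▸ mem_top : Pi.single i 1 ∈ U)
  obtain ⟨ℓ, hℓ, hUℓ⟩ := U.exists_le_ker_of_lt_top hU
  refine ⟨fun i => ℓ (Pi.single i 1), fun hc => hℓ ((Pi.basisFun ℚ ι).ext fun i => ?_), ?_⟩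
  · simpa using congrFun hc i
  · intro z hz
    have hzU : ℓ (fun i => (z i : ℚ)) = 0 := hUℓ (by simpa [U, castQ_apply] using hz)
    rw [pi_eq_sum_univ' (fun i => (z i : ℚ)), map_sum] at hzU
    simp only [map_smul, smul_eq_mul] at hzU
    exact_mod_cast (by simpa [mul_comm] using hzU)

theorem notMem_span_intPoints {v : ι → ℝ} (hv : LinearIndependent ℚ v)
    {W : Submodule ℝ (ι → ℝ)} (hW : W ≠ ⊤) :
    v ∉ span ℝ {y | y ∈ W ∧ ∃ z : ι → ℤ, y = fun i => (z i : ℝ)} := by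
  obtain ⟨c, hc, hcW⟩ := exists_rat_functional_of_ne_top hW
  let L : (ι → ℝ) →ₗ[ℝ] ℝ := ∑ i, (c i : ℝ) • LinearMap.proj i
  have L_apply (y : ι → ℝ) : L y = ∑ i, (c i : ℝ) * y i := by simp [L]
  intro hvW
  have hLv : L v = 0 := by
    refine (span_le (p := LinearMap.ker L)).mpr ?_ hvW
    rintro _ ⟨hyW, z, rfl⟩
    simpa [L_apply] using hcW z hyW
  refine hc (funext fun i => Fintype.linearIndependent_iff.mp hv c ?_ i)
  simpa [L_apply, Rat.smul_def] using hLv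

theorem finite_setOf_norm_intCast_le (r : ℝ) :
    {z : ι → ℤ | ‖fun i => (z i : ℝ)‖ ≤ r}.Finite := by
  have hcast : Tendsto (fun (z : ι → ℤ) i => (z i : ℝ)) cofinite (cocompact _) := by
    have := Tendsto.pi_map_coprodᵢ fun _ : ι => Int.tendsto_coe_cofinite
    rwa [coprodᵢ_cofinite, coprodᵢ_cocompact] at this
  simpa [Set.preimage, mem_closedBall_zero_iff] using
    tendsto_cofinite_cocompact_iff.mp hcast _ (isCompact_closedBall (0 : ι → ℝ) r)

theorem finite_intPoints_of_ker_le_span {F : Type*} [NormedAddCommGroup F] [NormedSpace ℝ F]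
    {v : ι → ℝ} (hv : LinearIndependent ℚ v) {V : Submodule ℝ (ι → ℝ)} (hV : V ≠ ⊤)
    {Φ : (ι → ℝ) →ₗ[ℝ] F} (hΦ : LinearMap.ker Φ ≤ ℝ ∙ v) (R : ℝ) :
    {z : ι → ℤ | (fun i => (z i : ℝ)) ∈ V ∧ ‖Φ fun i => (z i : ℝ)‖ ≤ R}.Finite := by
  set W := span ℝ {y | y ∈ V ∧ ∃ z : ι → ℤ, y = fun i => (z i : ℝ)}
  have hvW : v ∉ W := notMem_span_intPoints hv hV
  have hinj : LinearMap.ker (Φ ∘ₗ W.subtype) = ⊥ := by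
    refine LinearMap.ker_eq_bot'.mpr fun ⟨w, hw⟩ hΦw => ?_
    obtain ⟨t, rfl⟩ := mem_span_singleton.mp (hΦ hΦw)
    by_cases ht : t = 0
    · simp [ht]
    · exact (hvW (by simpa [smul_smul, ht] using W.smul_mem t⁻¹ hw)).elim
  obtain ⟨C, -, hC⟩ := (Φ ∘ₗ W.subtype).exists_antilipschitzWith hinj
  refine (finite_setOf_norm_intCast_le (C * R)).subset fun z ⟨hzV, hzR⟩ => ?_
  have hzW : (fun i => (z i : ℝ)) ∈ W := subset_span ⟨hzV, z, rfl⟩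
  calc ‖fun i => (z i : ℝ)‖ = ‖(⟨_, hzW⟩ : W)‖ := rfl
    _ ≤ C * ‖Φ fun i => (z i : ℝ)‖ := hC.le_mul_norm (map_zero _) _
    _ ≤ C * R := by gcongr

end

theorem finite_and_ncard_le_of_sub_mem {G : Type*} [AddGroup G] {S P : Set G} (hP : P.Finite)
    (hSP : ∀ x ∈ S, ∀ y ∈ S, x - y ∈ P) : S.Finite ∧ S.ncard ≤ P.ncard := by
  rcases S.eq_empty_or_nonempty with rfl | ⟨y, hy⟩
  · simp
  have hmaps : Set.MapsTo (· - y) S P := fun x hx => hSP x hx y hy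
  have hinj : Set.InjOn (· - y) S := (sub_left_injective).injOn
  exact ⟨hP.of_injOn hmaps hinj, Set.ncard_le_ncard_of_injOn _ hmaps hinj hP⟩

section

variable {d : ℕ} (α : Fin d → ℝ)

noncomputable def smulSubTail : (Fin (d + 1) → ℝ) →ₗ[ℝ] (Fin d → ℝ) :=
  (LinearMap.proj 0).smulRight α - LinearMap.funLeft ℝ ℝ Fin.succ

@[simp]
theorem smulSubTail_apply (y : Fin (d + 1) → ℝ) : smulSubTail α y = y 0 • α - Fin.tail y :=
  rfl

theorem smulSubTail_intCast_cons (p : ℤ) (n : Fin d → ℤ) :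
    smulSubTail α (fun i => ((Fin.cons p n : Fin (d + 1) → ℤ) i : ℝ)) =
      (p : ℝ) • α - fun i => (n i : ℝ) := by
  ext i
  simp [Fin.tail]

theorem smulSubTail_surjective : Function.Surjective (smulSubTail α) :=
  fun x => ⟨Fin.cons 0 (-x), by ext i; simp⟩

theorem ker_smulSubTail_le : LinearMap.ker (smulSubTail α) ≤ ℝ ∙ Fin.cons 1 α := by
  intro y hy
  rw [LinearMap.mem_ker, smulSubTail_apply, sub_eq_zero] at hy
  refine mem_span_singleton.mpr ⟨y 0, funext fun i => Fin.cases ?_ (fun j => ?_) i⟩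
  · simp
  · simpa [Fin.tail] using congrFun hy j

theorem linearIndependent_cons_one
    (hirr : ∀ (q0 : ℤ) (q : Fin d → ℤ), (q0 : ℝ) + ∑ i, (q i : ℝ) * α i = 0 → q0 = 0 ∧ q = 0) :
    LinearIndependent ℚ (Fin.cons 1 α : Fin (d + 1) → ℝ) := by
  rw [← LinearIndependent.iff_fractionRing ℤ ℚ, Fintype.linearIndependent_iff]
  intro g hg
  obtain ⟨h0, htail⟩ := hirr (g 0) (Fin.tail g) (by simpa [Fin.sum_univ_succ, Fin.tail] using hg)
  exact fun i => Fin.cases h0 (fun j => congrFun htail j) i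

end

theorem finitely_many_lattice_hits_of_hyperplane {d : ℕ} (α : Fin d → ℝ)
    (hirr : ∀ (q0 : ℤ) (q : Fin d → ℤ),
      (q0 : ℝ) + ∑ i, (q i : ℝ) * α i = 0 → q0 = 0 ∧ q = 0)
    (f : (Fin d → ℝ) →ₗ[ℝ] ℝ) (hf : f ≠ 0)
    (K : Set (Fin d → ℝ)) (hK : Bornology.IsBounded K) :
    ∃ Q : ℕ, 0 < Q ∧ ∀ (c : ℝ) (a : Fin d → ℝ),
      {q : ℤ | ∃ m : Fin d → ℤ,
          (a + (q : ℝ) • α - fun i => (m i : ℝ)) ∈ K ∧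
          f (a + (q : ℝ) • α - fun i => (m i : ℝ)) = c}.Finite
      ∧ {q : ℤ | ∃ m : Fin d → ℤ,
          (a + (q : ℝ) • α - fun i => (m i : ℝ)) ∈ K ∧
          f (a + (q : ℝ) • α - fun i => (m i : ℝ)) = c}.ncard ≤ Q := by
  obtain ⟨R, hR⟩ := Metric.isBounded_iff.mp hK
  have hV : LinearMap.ker (f ∘ₗ smulSubTail α) ≠ ⊤ := fun h => hf <| LinearMap.ext fun x => by
    obtain ⟨y, rfl⟩ := smulSubTail_surjective α x
    exact LinearMap.mem_ker.mp (h ▸ mem_top : y ∈ LinearMap.ker (f ∘ₗ smulSubTail α))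
  set Z := {z : Fin (d + 1) → ℤ | (fun i => (z i : ℝ)) ∈ LinearMap.ker (f ∘ₗ smulSubTail α) ∧
    ‖smulSubTail α fun i => (z i : ℝ)‖ ≤ R}
  have hZ : Z.Finite :=
    finite_intPoints_of_ker_le_span (linearIndependent_cons_one α hirr) hV (ker_smulSubTail_le α) R
  set P := (fun z : Fin (d + 1) → ℤ => z 0) '' Z
  refine ⟨P.ncard + 1, Nat.succ_pos _, fun c a => ?_⟩
  refine (finite_and_ncard_le_of_sub_mem (hZ.image _) ?_).imp_right (·.trans (Nat.le_succ _))
  rintro q ⟨m, hmK, hmc⟩ q' ⟨m', hm'K, hm'c⟩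
  have hsub : smulSubTail α (fun i => ((Fin.cons (q - q') (m - m') : Fin (d + 1) → ℤ) i : ℝ)) =
      (a + (q : ℝ) • α - fun i => (m i : ℝ)) - (a + (q' : ℝ) • α - fun i => (m' i : ℝ)) := by
    rw [smulSubTail_intCast_cons]
    ext i
    simp only [Pi.sub_apply, Pi.add_apply, Pi.smul_apply, smul_eq_mul]
    push_cast
    ring
  refine ⟨Fin.cons (q - q') (m - m'), ⟨?_, ?_⟩, rfl⟩
  · simp [LinearMap.mem_ker, hsub, hmc, hm'c]
  · rw [hsub, ← dist_eq_norm]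
    exact hR hmK hm'K
end

section
/- Let K ⊂ ℝ^{d−1} be a finite union of convex polytopes each with nonempty interior. Then for every x in the boundary ∂K there exist a nonzero linear form f and c ∈ ℝ such that the intersection of the hyperplane H_{f,c} = {q : f(q) = c} with ∂K has nonempty interior relative to H_{f,c}, and x lies in the closure of this relative interior. -/
/-!
Each polytope `conv S` has its frontier inside the finitely many proper affine spans of subsets
of `S`: by Carathéodory a frontier point lies in the hull of an affinely independent `T ⊆ S`, and
if `T` spans, one of its barycentric coordinates must vanish. So `∂K` is covered by finitely many
hyperplanes, and Baire's theorem on the closed set `∂K` makes the points near which `∂K` lies in a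
single hyperplane `H` dense in `∂K`. Near such a point `q`, each open half-ball cut out by `H`
misses `∂K`, hence lies in `int K` or in the exterior of `K`; as `K = cl (int K)` and `q ∈ ∂K`
they lie on opposite sides, which puts all of `H` near `q` into `∂K`.
-/

open Set Metric Filter Topology

theorem frontier_iUnion_subset_of_finite {X ι : Type*} [TopologicalSpace X] [Finite ι]
    (s : ι → Set X) : frontier (⋃ i, s i) ⊆ ⋃ i, frontier (s i) := by
  rintro x ⟨hcl, hint⟩
  rw [closure_iUnion_of_finite, mem_iUnion] at hcl
  obtain ⟨i, hi⟩ := hcl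
  exact mem_iUnion.2 ⟨i, hi, fun h => hint (interior_mono (subset_iUnion s i) h)⟩

theorem closure_interior_iUnion_of_finite {X ι : Type*} [TopologicalSpace X] [Finite ι]
    {s : ι → Set X} (hs : ∀ i, closure (interior (s i)) = s i) :
    closure (interior (⋃ i, s i)) = ⋃ i, s i := by
  refine Subset.antisymm ?_ ?_
  · exact closure_minimal interior_subset
      (isClosed_iUnion_of_finite fun i => hs i ▸ isClosed_closure)
  · calc ⋃ i, s i = closure (⋃ i, interior (s i)) := by
          simp only [closure_iUnion_of_finite, hs]
      _ ⊆ closure (interior (⋃ i, s i)) :=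
          closure_mono (iUnion_subset fun i => interior_mono (subset_iUnion s i))

theorem IsPreconnected.subset_interior_or_subset_interior_compl {X : Type*} [TopologicalSpace X]
    {U s : Set X} (hU : IsPreconnected U) (hUs : Disjoint U (frontier s)) :
    U ⊆ interior s ∨ U ⊆ interior sᶜ :=
  hU.subset_or_subset isOpen_interior isOpen_interior
    (disjoint_compl_right.mono interior_subset interior_subset)
    (by rw [← compl_frontier_eq_union_interior]; exact hUs.subset_compl_right)

theorem IsClosed.subset_closure_iUnion_eventually_mem {X ι : Type*} [PseudoEMetricSpace X]
    [CompleteSpace X] [Countable ι] {T : Set X} (hT : IsClosed T) {H : ι → Set X}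
    (hH : ∀ i, IsClosed (H i)) (hcover : T ⊆ ⋃ i, H i) :
    T ⊆ closure (⋃ i, {q ∈ T | ∀ᶠ z in 𝓝[T] q, z ∈ H i}) := by
  have : CompleteSpace T := hT.completeSpace_coe
  have hdense : Dense (⋃ i, interior (((↑) : T → X) ⁻¹' H i)) :=
    dense_iUnion_interior_of_closed (fun i => (hH i).preimage continuous_subtype_val)
      (eq_univ_of_forall fun y => by simpa using hcover y.2)
  have himage : (↑) '' (⋃ i, interior (((↑) : T → X) ⁻¹' H i)) ⊆
      ⋃ i, {q ∈ T | ∀ᶠ z in 𝓝[T] q, z ∈ H i} := by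
    rintro _ ⟨y, hy, rfl⟩
    obtain ⟨i, hi⟩ := mem_iUnion.1 hy
    refine mem_iUnion.2 ⟨i, y.2, ?_⟩
    rw [← map_nhds_subtype_val]
    exact mem_interior_iff_mem_nhds.1 hi
  intro x hx
  exact closure_mono himage
    (image_closure_subset_closure_image continuous_subtype_val ⟨⟨x, hx⟩, hdense _, rfl⟩)

theorem AffineBasis.mem_affineSpan_image_compl_of_coord_eq_zero {ι k V P : Type*} [Fintype ι]
    [Ring k] [Nontrivial k] [AddCommGroup V] [Module k V] [AddTorsor V P]
    (b : AffineBasis ι k P) {j : ι} {x : P} (hx : b.coord j x = 0) :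
    x ∈ affineSpan k (b '' {j}ᶜ) := by
  rw [← b.affineCombination_coord_eq_self x]
  refine affineCombination_mem_affineSpan_image (b.sum_coord_apply_eq_one x) ?_ b
  intro i _ hi
  obtain rfl : i = j := by simpa using hi
  exact hx

theorem exists_subset_affineSpan_ne_top_of_mem_frontier_convexHull {E : Type*}
    [NormedAddCommGroup E] [NormedSpace ℝ E] {S : Finset E} {x : E}
    (hx : x ∈ frontier (convexHull ℝ (S : Set E))) :
    ∃ A : Finset E, A ⊆ S ∧ affineSpan ℝ (A : Set E) ≠ ⊤ ∧ x ∈ affineSpan ℝ (A : Set E) := by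
  classical
  have hxS : x ∈ convexHull ℝ (S : Set E) :=
    (S.finite_toSet.isCompact_convexHull (𝕜 := ℝ)).isClosed.frontier_subset hx
  rw [convexHull_eq_union] at hxS
  simp only [mem_iUnion] at hxS
  obtain ⟨T, hTS, hTind, hxT⟩ := hxS
  by_cases hT : affineSpan ℝ (T : Set E) = ⊤
  swap
  · exact ⟨T, Finset.coe_subset.1 hTS, hT, convexHull_subset_affineSpan _ hxT⟩
  let b : AffineBasis T ℝ E := ⟨(↑), hTind, by simpa using hT⟩
  have hrange : range b = T := Subtype.range_coe_subtype.trans Finset.setOfPred_mem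
  have hxT' : x ∉ interior (convexHull ℝ (range b)) := fun h =>
    hx.2 (interior_mono (convexHull_mono (hrange ▸ hTS)) h)
  simp only [b.interior_convexHull, mem_ofPred_eq, not_forall, not_lt] at hxT'
  obtain ⟨j, hj⟩ := hxT'
  have hcoord : b.coord j x = 0 :=
    le_antisymm hj ((b.convexHull_eq_nonneg_coord ▸ hrange ▸ hxT) j)
  have himage : b '' {j}ᶜ = ↑(T.erase j) := by
    rw [compl_eq_univ_sdiff, image_sdiff b.ind.injective, image_univ, hrange, image_singleton,
      Finset.coe_erase]
    rfl
  refine ⟨T.erase j, (T.erase_subset _).trans (Finset.coe_subset.1 hTS), fun htop => ?_,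
    himage ▸ b.mem_affineSpan_image_compl_of_coord_eq_zero hcoord⟩
  have hj : b j ∈ affineSpan ℝ (b '' {j}ᶜ) := himage ▸ htop ▸ AffineSubspace.mem_top ℝ E (b j)
  exact (b.ind.mem_affineSpan_iff j {j}ᶜ).1 hj rfl

theorem AffineSubspace.exists_hyperplane_of_ne_top {E : Type*} [NormedAddCommGroup E]
    [NormedSpace ℝ E] [FiniteDimensional ℝ E] {s : AffineSubspace ℝ E}
    (hne : (s : Set E).Nonempty) (htop : s ≠ ⊤) :
    ∃ p : (E →L[ℝ] ℝ) × ℝ, p.1 ≠ 0 ∧ ∀ y ∈ s, p.1 y = p.2 := by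
  obtain ⟨a, ha⟩ := hne
  have hdir : s.direction < ⊤ := lt_top_iff_ne_top.2 fun h =>
    htop ((AffineSubspace.direction_eq_top_iff_of_nonempty ⟨a, ha⟩).1 h)
  obtain ⟨φ, hφ, hφs⟩ := Submodule.exists_dual_map_eq_bot_of_lt_top hdir inferInstance
  refine ⟨(LinearMap.toContinuousLinearMap φ, φ a), fun h => hφ ?_, fun y hy => ?_⟩
  · exact LinearMap.toContinuousLinearMap.injective (h.trans (map_zero _).symm)
  · have hya : φ (y -ᵥ a) = 0 := (Submodule.mem_bot ℝ).1
      (hφs ▸ Submodule.mem_map_of_mem (AffineSubspace.vsub_mem_direction hy ha))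
    simpa [sub_eq_zero] using hya

theorem exists_finset_hyperplanes_cover_frontier_iUnion_convexHull {E ι : Type*}
    [NormedAddCommGroup E] [NormedSpace ℝ E] [FiniteDimensional ℝ E] [Fintype ι]
    (S : ι → Finset E) :
    ∃ F : Finset ((E →L[ℝ] ℝ) × ℝ), (∀ p ∈ F, p.1 ≠ 0) ∧
      frontier (⋃ i, convexHull ℝ (S i : Set E)) ⊆ ⋃ p ∈ F, {y | p.1 y = p.2} := by
  classical
  set J : Finset (Finset E) := (Finset.univ.biUnion fun i => (S i).powerset).filter
    fun A => A.Nonempty ∧ affineSpan ℝ (A : Set E) ≠ ⊤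
  have hJ : ∀ A ∈ J, ∃ p : (E →L[ℝ] ℝ) × ℝ, p.1 ≠ 0 ∧ ∀ y ∈ affineSpan ℝ (A : Set E), p.1 y = p.2 :=
    fun A hA => AffineSubspace.exists_hyperplane_of_ne_top
      ((affineSpan_nonempty ℝ).2 (Finset.mem_filter.1 hA).2.1) (Finset.mem_filter.1 hA).2.2
  choose! g hg0 hg using hJ
  refine ⟨J.image g, Finset.forall_mem_image.2 hg0, fun x hx => ?_⟩
  obtain ⟨i, hi⟩ := mem_iUnion.1 (frontier_iUnion_subset_of_finite _ hx)
  obtain ⟨A, hAS, hAtop, hxA⟩ := exists_subset_affineSpan_ne_top_of_mem_frontier_convexHull hi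
  have hAJ : A ∈ J := Finset.mem_filter.2 ⟨Finset.mem_biUnion.2 ⟨i, Finset.mem_univ i,
    Finset.mem_powerset.2 hAS⟩, Finset.coe_nonempty.1 ((affineSpan_nonempty ℝ).1 ⟨x, hxA⟩), hAtop⟩
  exact mem_iUnion₂.2 ⟨g A, Finset.mem_image_of_mem g hAJ, hg A hAJ x hxA⟩

theorem ContinuousLinearMap.closure_preimage_of_ne_zero {E : Type*} [AddCommGroup E]
    [TopologicalSpace E] [ContinuousAdd E] [Module ℝ E] [ContinuousSMul ℝ E] {f : E →L[ℝ] ℝ}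
    (hf : f ≠ 0) (s : Set ℝ) :
    closure (f ⁻¹' s) = f ⁻¹' closure s :=
  ((f.isOpenMap_of_ne_zero hf).preimage_closure_eq_closure_preimage f.continuous s).symm

theorem hyperplane_inter_ball_subset_frontier {E : Type*} [NormedAddCommGroup E]
    [NormedSpace ℝ E] {K : Set E} (hK : closure (interior K) = K) {f : E →L[ℝ] ℝ} (hf : f ≠ 0)
    {c δ : ℝ} {q : E} (hq : q ∈ frontier K) (hflat : frontier K ∩ ball q δ ⊆ {z | f z = c}) :
    {z | f z = c} ∩ ball q δ ⊆ frontier K := by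
  set B := ball q δ
  set P := B ∩ f ⁻¹' Ioi c
  set N := B ∩ f ⁻¹' Iio c
  have hPN : ∀ z ∈ B, f z = c → z ∈ closure P ∧ z ∈ closure N := by
    intro z hzB hz
    refine ⟨isOpen_ball.inter_closure ⟨hzB, ?_⟩, isOpen_ball.inter_closure ⟨hzB, ?_⟩⟩
    · rw [f.closure_preimage_of_ne_zero hf, closure_Ioi]
      exact hz.ge
    · rw [f.closure_preimage_of_ne_zero hf, closure_Iio]
      exact hz.le
  have hB : B ⊆ closure (P ∪ N) := by
    intro z hzB
    rw [closure_union]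
    rcases lt_trichotomy (f z) c with h | h | h
    · exact Or.inr (subset_closure ⟨hzB, h⟩)
    · exact Or.inl (hPN z hzB h).1
    · exact Or.inl (subset_closure ⟨hzB, h⟩)
  have hoff : ∀ {I : Set ℝ}, c ∉ I → Disjoint (B ∩ f ⁻¹' I) (frontier K) := by
    intro I hI
    refine disjoint_left.2 fun z hz hzK => hI ?_
    rw [← show f z = c from hflat ⟨hzK, hz.1⟩]
    exact hz.2
  have hKcl : IsClosed K := hK ▸ isClosed_closure
  have hPc : IsPreconnected P :=
    ((convex_ball q δ).inter ((convex_Ioi c).linear_preimage f.toLinearMap)).isPreconnected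
  have hNc : IsPreconnected N :=
    ((convex_ball q δ).inter ((convex_Iio c).linear_preimage f.toLinearMap)).isPreconnected
  rintro z ⟨hz, hzB⟩
  rw [frontier_eq_closure_inter_closure]
  rcases hPc.subset_interior_or_subset_interior_compl (hoff self_notMem_Ioi) with hPK | hPK <;>
  rcases hNc.subset_interior_or_subset_interior_compl (hoff self_notMem_Iio) with hNK | hNK
  · have hBK : B ⊆ K := hK ▸ hB.trans (closure_mono (union_subset hPK hNK))
    exact absurd (mem_interior.2 ⟨B, hBK, isOpen_ball, mem_ball_self (pos_of_mem_ball hzB)⟩) hq.2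
  · exact ⟨closure_mono (hPK.trans interior_subset) (hPN z hzB hz).1,
      closure_mono (hNK.trans interior_subset) (hPN z hzB hz).2⟩
  · exact ⟨closure_mono (hNK.trans interior_subset) (hPN z hzB hz).2,
      closure_mono (hPK.trans interior_subset) (hPN z hzB hz).1⟩
  · have hBK : B ⊆ (interior K)ᶜ := by
      rw [← closure_compl]
      exact hB.trans (closure_mono (union_subset (hPK.trans interior_subset)
        (hNK.trans interior_subset)))
    have hq' : q ∈ closure (interior K) := hK.symm ▸ hKcl.frontier_subset hq
    obtain ⟨w, hwB, hwK⟩ := mem_closure_iff_nhds.1 hq' B (ball_mem_nhds q (pos_of_mem_ball hzB))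
    exact absurd hwK (hBK hwB)

theorem boundary_point_in_closure_of_facet_relative_interior {d m : ℕ}
    (S : Fin m → Finset (Fin d → ℝ))
    (hint : ∀ i, (interior (convexHull ℝ (S i : Set (Fin d → ℝ)))).Nonempty)
    (K : Set (Fin d → ℝ)) (hK : K = ⋃ i, convexHull ℝ (S i : Set (Fin d → ℝ)))
    (x : Fin d → ℝ) (hx : x ∈ frontier K) :
    ∃ (f : (Fin d → ℝ) →ₗ[ℝ] ℝ) (c : ℝ), f ≠ 0 ∧
      -- `R` is the interior of `H_{f,c} ∩ ∂K` relative to the hyperplane `H_{f,c}`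
      {q : Fin d → ℝ | f q = c ∧ q ∈ frontier K ∧
          ∃ ε > (0:ℝ), ∀ y : Fin d → ℝ, f y = c → dist y q < ε → y ∈ frontier K}.Nonempty ∧
      x ∈ closure {q : Fin d → ℝ | f q = c ∧ q ∈ frontier K ∧
          ∃ ε > (0:ℝ), ∀ y : Fin d → ℝ, f y = c → dist y q < ε → y ∈ frontier K} := by
  have hreg : closure (interior K) = K := hK ▸ closure_interior_iUnion_of_finite fun i =>
    ((convex_convexHull ℝ _).closure_interior_eq_closure_of_nonempty_interior (hint i)).trans
      (((S i).finite_toSet.isCompact_convexHull (𝕜 := ℝ)).isClosed.closure_eq)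
  obtain ⟨F, hF0, hcover⟩ := exists_finset_hyperplanes_cover_frontier_iUnion_convexHull S
  have hxF := isClosed_frontier.subset_closure_iUnion_eventually_mem
    (H := fun p : F => {y | p.1.1 y = p.1.2})
    (fun p => isClosed_eq p.1.1.continuous continuous_const)
    (by simpa [← hK, iUnion_subtype] using hcover) hx
  rw [closure_iUnion_of_finite, mem_iUnion] at hxF
  obtain ⟨⟨⟨f, c⟩, hp⟩, hxp⟩ := hxF
  have hflat : {q ∈ frontier K | ∀ᶠ z in 𝓝[frontier K] q, f z = c} ⊆
      {q | f q = c ∧ q ∈ frontier K ∧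
        ∃ ε > (0:ℝ), ∀ y, f y = c → dist y q < ε → y ∈ frontier K} := by
    rintro q ⟨hq, hqf⟩
    obtain ⟨δ, hδ, hδf⟩ := mem_nhdsWithin_iff.1 hqf
    refine ⟨hδf ⟨mem_ball_self hδ, hq⟩, hq, δ, hδ, fun y hy hyq => ?_⟩
    exact hyperplane_inter_ball_subset_frontier hreg (hF0 _ hp) hq
      (fun z hz => hδf ⟨hz.2, hz.1⟩) ⟨hy, hyq⟩
  have hxR := closure_mono hflat hxp
  exact ⟨f, c, fun h => hF0 _ hp (ContinuousLinearMap.coe_injective h),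
    closure_nonempty_iff.1 ⟨x, hxR⟩, hxR⟩
end

section
/- Let α = (α_1,…,α_d) ∈ (0,1)^d be a totally irrational frequency vector, and let C, C' be real numbers with C, C' ≥ 1 − 1/d, C ≤ 1, and C + C' ≥ 2 − (1 + min_i α_i)/(d−1). Let T̂ be the Tijdeman map on 1^⊥ ∩ [−C', ∞)^d defined by T̂(x) = x + α − e_i when x ∈ S_i, where S_i is the set of x = (x_1,…,x_d) ∈ 1^⊥ ∩ [−C',∞)^d with x_i + α_i − 1 ≥ −C' and (C − x_i)/α_i ≤ (C − x_j)/α_j for all j with x_j + α_j − 1 ≥ −C' (ties broken by smallest index). Then for every starting point x₀ ∈ [C−1, C]^d ∩ 1^⊥, all iterates T̂^n(x₀), n ∈ ℕ, lie in [−C', C]^d. -/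
/-- The piece `S_{α,C,C',i}` of Tijdeman's construction, as a predicate on points of
`1^⊥ ∩ [-C',∞)^d`. -/
def inS {d : ℕ} (α : Fin d → ℝ) (C C' : ℝ) (i : Fin d) (x : Fin d → ℝ) : Prop :=
  (∑ j, x j = 0) ∧ (∀ j, -C' ≤ x j) ∧ (-C' ≤ x i + α i - 1) ∧
    ∀ j : Fin d, -C' ≤ x j + α j - 1 → (C - x i) / α i ≤ (C - x j) / α j


/-!
Think of coordinate `j` as a task that accumulates `α j` of work per step and is served (lowered
by `1`) when chosen; `(C - x j) / α j` is the time at which it overflows `C`, its deadline. The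
invariant `Tijdeman.Schedulable` is the earliest-deadline-first feasibility condition: for every
horizon `h ≥ 1`, at most `h` units of work are due within `h` steps. Serving the admissible task
with the earliest deadline preserves it: if that task is due within `h + 1` steps, the demand at
`h` drops by one from the demand at `h + 1`; otherwise every other admissible task is due later
too, and the inadmissible ones sit so low that the bound `C + C' ≥ 2 - (1 + min α) / (d - 1)`
controls their demand. The condition at horizon `1` keeps every coordinate below `C`.
-/

open Finset

namespace Tijdeman

variable {ι : Type*} [Fintype ι]

lemma max_zero_ceil_lt {v b : ℝ} (hb : 0 < b) (hvb : 0 < v → v + 1 ≤ b) :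
    max (0 : ℝ) (⌈v⌉ : ℝ) < b := by
  refine max_lt hb ?_
  rcases le_or_gt v 0 with hv | hv
  · exact lt_of_le_of_lt (by exact_mod_cast Int.ceil_nonpos.mpr hv) hb
  · exact (Int.ceil_lt_add_one v).trans_le (hvb hv)

lemma sum_max_zero_ceil_le {κ : Type*} (s : Finset κ) (v b : κ → ℝ) {n : ℕ}
    (hb : ∀ j ∈ s, 0 < b j) (hvb : ∀ j ∈ s, 0 < v j → v j + 1 ≤ b j)
    (hsum : ∑ j ∈ s, b j ≤ n + 1) :
    ∑ j ∈ s, max 0 ⌈v j⌉ ≤ n := by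
  rcases s.eq_empty_or_nonempty with rfl | hs
  · simp
  have hlt : ((∑ j ∈ s, max 0 ⌈v j⌉ : ℤ) : ℝ) < n + 1 := by
    push_cast
    exact (sum_lt_sum_of_nonempty hs fun j hj => max_zero_ceil_lt (hb j hj) (hvb j hj)).trans_le
      hsum
  have : ∑ j ∈ s, max 0 ⌈v j⌉ < (n : ℤ) + 1 := by exact_mod_cast hlt
  omega

lemma add_mul_le_of_div_le_div {C a b p q t : ℝ} (hp : 0 < p) (hq : 0 < q)
    (hdiv : (C - a) / p ≤ (C - b) / q) (ha : a + t * p ≤ C) : b + t * q ≤ C := by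
  have : t ≤ (C - b) / q := ((le_div_iff₀ hp).mpr (by linarith)).trans hdiv
  linarith [(le_div_iff₀ hq).mp this]

/-- The number of units of work due within `h` steps. -/
noncomputable def demand (α : ι → ℝ) (C : ℝ) (x : ι → ℝ) (h : ℕ) : ℤ :=
  ∑ j, max 0 ⌈x j + h * α j - C⌉

structure Schedulable (α : ι → ℝ) (C C' : ℝ) (x : ι → ℝ) : Prop where
  sum_eq_zero : ∑ j, x j = 0
  neg_le : ∀ j, -C' ≤ x j
  le : ∀ j, x j ≤ C
  demand_le : ∀ h : ℕ, 1 ≤ h → demand α C x h ≤ h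

lemma two_le_demand {α : ι → ℝ} {C : ℝ} {x : ι → ℝ} {h : ℕ} {i j : ι} (hij : i ≠ j)
    (hi : C < x i + h * α i) (hj : C < x j + h * α j) : 2 ≤ demand α C x h :=
  calc (2 : ℤ) = 1 + 1 := rfl
    _ ≤ max 0 ⌈x i + h * α i - C⌉ + max 0 ⌈x j + h * α j - C⌉ :=
      add_le_add (le_max_of_le_right (Int.one_le_ceil_iff.mpr (by linarith)))
        (le_max_of_le_right (Int.one_le_ceil_iff.mpr (by linarith)))
    _ ≤ demand α C x h :=
      add_le_sum (f := fun k => max 0 ⌈x k + h * α k - C⌉) (fun k _ => le_max_left _ _)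
        (mem_univ i) (mem_univ j) hij

lemma schedulable_of_mem_Icc {α : ι → ℝ} {C C' : ℝ} {x : ι → ℝ} (hα : ∀ j, 0 < α j)
    (hsum : ∑ j, α j = 1) (hC : (Fintype.card ι : ℝ) * (1 - C) ≤ 1) (hCC' : 1 ≤ C + C')
    (hx : ∑ j, x j = 0) (hbox : ∀ j, x j ∈ Set.Icc (C - 1) C) : Schedulable α C C' x where
  sum_eq_zero := hx
  neg_le j := by linarith [(hbox j).1]
  le j := (hbox j).2
  demand_le h hh := by
    have hh' : (1 : ℝ) ≤ h := by exact_mod_cast hh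
    refine sum_max_zero_ceil_le _ _ (fun j => h * α j + (1 - C + x j)) (fun j _ => ?_)
      (fun j _ _ => by linarith) ?_
    · nlinarith [hα j, (hbox j).1]
    · simp only [sum_add_distrib, ← mul_sum, hsum, sum_const, card_univ, nsmul_eq_mul, hx]
      linarith

variable [DecidableEq ι]

lemma demand_add_sub_single (α : ι → ℝ) (C : ℝ) (x : ι → ℝ) (i : ι) (h : ℕ) :
    demand α C (x + α - Pi.single i 1) h =
      max 0 (⌈x i + (h + 1 : ℕ) * α i - C⌉ - 1) +
        ∑ j ∈ univ.erase i, max 0 ⌈x j + (h + 1 : ℕ) * α j - C⌉ := by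
  rw [demand, ← add_sum_erase _ _ (mem_univ i)]
  congr 1
  · rw [← Int.ceil_sub_one]
    simp only [Pi.sub_apply, Pi.add_apply, Pi.single_eq_same]
    push_cast
    ring_nf
  · refine sum_congr rfl fun j hj => ?_
    simp only [Pi.sub_apply, Pi.add_apply, Pi.single_eq_of_ne (ne_of_mem_erase hj)]
    push_cast
    ring_nf

lemma demand_add_sub_single_of_lt {α : ι → ℝ} {C : ℝ} {x : ι → ℝ} {i : ι} {h : ℕ}
    (hi : C < x i + (h + 1 : ℕ) * α i) :
    demand α C (x + α - Pi.single i 1) h + 1 = demand α C x (h + 1) := by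
  have hceil : 1 ≤ ⌈x i + (h + 1 : ℕ) * α i - C⌉ := Int.one_le_ceil_iff.mpr (by linarith)
  rw [demand_add_sub_single, demand, ← add_sum_erase _ _ (mem_univ i),
    max_eq_right (by omega : (0 : ℤ) ≤ _ - 1), max_eq_right (by omega : (0 : ℤ) ≤ _)]
  ring

namespace Schedulable

variable {α : ι → ℝ} {C C' : ℝ} {x : ι → ℝ} {i : ι}

lemma add_sub_single_le (hα : ∀ j, α j ∈ Set.Ioo 0 1) (hCC' : 1 ≤ C + C')
    (hx : Schedulable α C C' x)
    (hmin : ∀ j, -C' ≤ x j + α j - 1 → (C - x i) / α i ≤ (C - x j) / α j) (j : ι) :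
    (x + α - Pi.single i 1 : ι → ℝ) j ≤ C := by
  rcases eq_or_ne j i with rfl | hji
  · simp only [Pi.sub_apply, Pi.add_apply, Pi.single_eq_same]
    linarith [hx.le j, (hα j).2]
  simp only [Pi.sub_apply, Pi.add_apply, Pi.single_eq_of_ne hji, sub_zero]
  by_contra! hj
  have hi : C < x i + (1 : ℕ) * α i := by
    by_contra! hi
    have := add_mul_le_of_div_le_div (hα i).1 (hα j).1 (hmin j (by linarith)) hi
    push_cast at this
    linarith
  have h2 := two_le_demand hji.symm hi (by push_cast; linarith)
  have h1 := hx.demand_le 1 le_rfl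
  push_cast at h1
  omega

lemma demand_add_sub_single_le (hα : ∀ j, 0 < α j) (hsum : ∑ j, α j = 1)
    (hgap : ∀ j, ((Fintype.card ι : ℝ) - 1) * (2 - (C + C')) ≤ 1 + α j)
    (hx : Schedulable α C C' x)
    (hmin : ∀ j, -C' ≤ x j + α j - 1 → (C - x i) / α i ≤ (C - x j) / α j)
    {h : ℕ} (hh : 1 ≤ h) :
    demand α C (x + α - Pi.single i 1) h ≤ h := by
  rcases lt_or_ge C (x i + (h + 1 : ℕ) * α i) with hi | hi
  · have := hx.demand_le (h + 1) (by omega)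
    rw [← demand_add_sub_single_of_lt hi] at this
    push_cast at this
    omega
  have hceil : ⌈x i + (h + 1 : ℕ) * α i - C⌉ ≤ 0 := Int.ceil_nonpos.mpr (by linarith)
  rw [demand_add_sub_single, max_eq_left (by omega), zero_add]
  have hh' : (1 : ℝ) ≤ h := by exact_mod_cast hh
  have hcard : 1 ≤ Fintype.card ι := Fintype.card_pos_iff.mpr ⟨i⟩
  -- inadmissible coordinates lie below `1 - C'`, which costs each of them at most `δ` extra work
  obtain ⟨δ, hδ0, hδ, hδcard⟩ : ∃ δ : ℝ, 0 ≤ δ ∧ 2 - (C + C') ≤ δ ∧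
      ((Fintype.card ι : ℝ) - 1) * δ ≤ 1 + α i := by
    refine ⟨max (2 - (C + C')) 0, le_max_right _ _, le_max_left _ _, ?_⟩
    rcases max_cases (2 - (C + C')) 0 with ⟨hmax, -⟩ | ⟨hmax, -⟩ <;> rw [hmax]
    · exact hgap i
    · linarith [hα i]
  refine sum_max_zero_ceil_le _ _ (fun j => h * α j + δ)
    (fun j _ => by nlinarith [hα j]) (fun j _ hv => ?_) ?_
  · by_cases hadm : -C' ≤ x j + α j - 1
    · have := add_mul_le_of_div_le_div (hα i) (hα j) (hmin j hadm) hi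
      linarith
    · push_cast at hv ⊢
      linarith
  · rw [sum_add_distrib, ← mul_sum, sum_erase_eq_sub (mem_univ i), hsum, sum_const,
      card_erase_of_mem (mem_univ i), card_univ, nsmul_eq_mul, Nat.cast_sub hcard]
    push_cast
    nlinarith [hα i]

lemma add_sub_single (hα : ∀ j, α j ∈ Set.Ioo 0 1) (hsum : ∑ j, α j = 1) (hCC' : 1 ≤ C + C')
    (hgap : ∀ j, ((Fintype.card ι : ℝ) - 1) * (2 - (C + C')) ≤ 1 + α j)
    (hx : Schedulable α C C' x) (hi : -C' ≤ x i + α i - 1)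
    (hmin : ∀ j, -C' ≤ x j + α j - 1 → (C - x i) / α i ≤ (C - x j) / α j) :
    Schedulable α C C' (x + α - Pi.single i 1) where
  sum_eq_zero := by simp [sum_add_distrib, sum_sub_distrib, hx.sum_eq_zero, hsum]
  neg_le j := by
    rcases eq_or_ne j i with rfl | hji
    · simpa using hi
    · simp only [Pi.sub_apply, Pi.add_apply, Pi.single_eq_of_ne hji, sub_zero]
      linarith [hx.neg_le j, (hα j).1]
  le := hx.add_sub_single_le hα hCC' hmin
  demand_le _ hh := hx.demand_add_sub_single_le (fun j => (hα j).1) hsum hgap hmin hh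

end Schedulable

end Tijdeman

open Tijdeman

theorem tijdeman_iterates_stay_in_box_general {d : ℕ} (hd : 2 ≤ d)
    (α : Fin d → ℝ) (hα : ∀ i, α i ∈ Set.Ioo (0:ℝ) 1) (hsum : ∑ i, α i = 1)
    (C C' : ℝ) (hC1 : 1 - 1/(d:ℝ) ≤ C) (hC'1 : 1 - 1/(d:ℝ) ≤ C')
    (hCC' : 2 - (1 + ⨅ i, α i) / ((d:ℝ) - 1) ≤ C + C')
    (T : (Fin d → ℝ) → (Fin d → ℝ))
    -- `T` is the Tijdeman map: on `1^⊥ ∩ [-C',∞)^d` it translates by `α - e_i`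
    -- where `i` is the smallest index with `x ∈ S_{α,C,C',i}`
    (hT : ∀ x : Fin d → ℝ, (∑ i, x i = 0) → (∀ i, -C' ≤ x i) →
      ∃ i : Fin d, inS α C C' i x ∧ (∀ j : Fin d, inS α C C' j x → i ≤ j) ∧
        T x = x + α - Pi.single i 1) :
    ∀ x₀ : Fin d → ℝ, (∑ i, x₀ i = 0) → (∀ i, x₀ i ∈ Set.Icc (C - 1) C) →
      ∀ (n : ℕ) (i : Fin d), (T^[n] x₀) i ∈ Set.Icc (-C') C := by
  intro x₀ hx₀ hbox n i
  have hd' : (2 : ℝ) ≤ d := by exact_mod_cast hd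
  have hd_inv : 1 / (d : ℝ) ≤ 1 / 2 := one_div_le_one_div_of_le two_pos hd'
  have hdC : (Fintype.card (Fin d) : ℝ) * (1 - C) ≤ 1 := by
    rw [Fintype.card_fin]
    calc (d : ℝ) * (1 - C) ≤ d * (1 / d) := by gcongr; linarith
      _ = 1 := by field_simp
  have hgap : ∀ j, ((Fintype.card (Fin d) : ℝ) - 1) * (2 - (C + C')) ≤ 1 + α j := by
    intro j
    rw [Fintype.card_fin]
    calc ((d : ℝ) - 1) * (2 - (C + C')) ≤ (d - 1) * ((1 + ⨅ i, α i) / (d - 1)) := by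
          gcongr; linarith; linarith
      _ = 1 + ⨅ i, α i := mul_div_cancel₀ _ (by linarith)
      _ ≤ 1 + α j := by gcongr; exact ciInf_le (Set.finite_range α).bddBelow j
  have hinv : ∀ n, Schedulable α C C' (T^[n] x₀) := by
    intro n
    induction n with
    | zero => exact schedulable_of_mem_Icc (fun j => (hα j).1) hsum hdC (by linarith) hx₀ hbox
    | succ n ih =>
      obtain ⟨k, ⟨-, -, hk, hmin⟩, -, hTk⟩ := hT _ ih.sum_eq_zero ih.neg_le
      rw [Function.iterate_succ_apply', hTk]
      exact ih.add_sub_single hα hsum (by linarith) hgap hk hmin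
  exact ⟨(hinv n).neg_le i, (hinv n).le i⟩

theorem tijdeman_iterates_stay_in_box {d : ℕ} (hd : 2 ≤ d)
    (α : Fin d → ℝ) (hα : ∀ i, α i ∈ Set.Ioo (0:ℝ) 1) (hsum : ∑ i, α i = 1)
    (hirr : LinearIndependent ℚ α)
    (C C' : ℝ) (hC1 : 1 - 1/(d:ℝ) ≤ C) (hC'1 : 1 - 1/(d:ℝ) ≤ C') (hC2 : C ≤ 1)
    (hCC' : 2 - (1 + ⨅ i, α i) / ((d:ℝ) - 1) ≤ C + C')
    (T : (Fin d → ℝ) → (Fin d → ℝ))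
    -- `T` is the Tijdeman map: on `1^⊥ ∩ [-C',∞)^d` it translates by `α - e_i`
    -- where `i` is the smallest index with `x ∈ S_{α,C,C',i}`
    (hT : ∀ x : Fin d → ℝ, (∑ i, x i = 0) → (∀ i, -C' ≤ x i) →
      ∃ i : Fin d, inS α C C' i x ∧ (∀ j : Fin d, inS α C C' j x → i ≤ j) ∧
        T x = x + α - Pi.single i 1) :
    ∀ x₀ : Fin d → ℝ, (∑ i, x₀ i = 0) → (∀ i, x₀ i ∈ Set.Icc (C - 1) C) →
      ∀ (n : ℕ) (i : Fin d), (T^[n] x₀) i ∈ Set.Icc (-C') C :=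
  tijdeman_iterates_stay_in_box_general hd α hα hsum C C' hC1 hC'1 hCC' T hT
end

section
/- Let α ∈ (0,1)^d with Σ α_i = 1. Taking x₀ = (1/2)π_α(1) = (1/2)(1 − dα) as initial point, for every i the i-th coordinate of y − x₀, as y ranges over E_α = π_α([0,1]^d), takes all values in the interval [−(1 + (d−2)α_i)/2, (1 + (d−2)α_i)/2]; consequently sup_{y∈E_α} ‖y − x₀‖_∞ = (1 + (d−2)‖α‖_∞)/2. -/
open Finset

lemma mem_Icc_zero_one_iff_abs_sub_half_le {ι : Type*} {y : ι → ℝ} :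
    y ∈ Set.Icc 0 1 ↔ ∀ j, |y j - 1 / 2| ≤ 1 / 2 := by
  simp only [Set.mem_Icc, Pi.le_def, Pi.zero_apply, Pi.one_apply, abs_le, ← forall_and]
  refine forall_congr' fun j => ?_
  constructor <;> rintro ⟨h, h'⟩ <;> constructor <;> linarith

section
variable {d : ℕ} (α : Fin d → ℝ)

lemma piAlpha_apply (x : Fin d → ℝ) (i : Fin d) :
    piAlpha α x i = x i - (∑ j, x j) * α i := by
  simp [piAlpha]

lemma piAlpha_apply_sub_half (y : Fin d → ℝ) (i : Fin d) :
    piAlpha α y i - (1 - d * α i) / 2 = piAlpha α (y - fun _ => 1 / 2) i := by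
  simp only [piAlpha_apply, Pi.sub_apply, sum_sub_distrib, sum_const, card_univ,
    Fintype.card_fin, nsmul_eq_mul]
  ring

lemma cast_card_univ_erase (i : Fin d) : ((univ.erase i).card : ℝ) = d - 1 := by
  rw [card_erase_of_mem (mem_univ i), card_univ, Fintype.card_fin, Nat.cast_pred i.pos]

lemma piAlpha_apply_eq_sub_sum_erase (u : Fin d → ℝ) (i : Fin d) :
    piAlpha α u i = (1 - α i) * u i - α i * ∑ j ∈ univ.erase i, u j := by
  rw [piAlpha_apply, ← add_sum_erase _ _ (mem_univ i)]
  ring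

lemma abs_piAlpha_apply_le {u : Fin d → ℝ} (hu : ∀ j, |u j| ≤ 1 / 2) {i : Fin d}
    (h0 : 0 ≤ α i) (h1 : α i ≤ 1) :
    |piAlpha α u i| ≤ (1 + (d - 2) * α i) / 2 := by
  have hrest : |∑ j ∈ univ.erase i, u j| ≤ (d - 1) / 2 := calc
    _ ≤ ∑ j ∈ univ.erase i, |u j| := abs_sum_le_sum_abs _ _
    _ ≤ (univ.erase i).card • (1 / 2 : ℝ) := sum_le_card_nsmul _ _ _ fun j _ => hu j
    _ = (d - 1) / 2 := by rw [nsmul_eq_mul, cast_card_univ_erase]; ring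
  calc |piAlpha α u i|
      ≤ |(1 - α i) * u i| + |α i * ∑ j ∈ univ.erase i, u j| := by
        rw [piAlpha_apply_eq_sub_sum_erase]; exact abs_sub _ _
    _ = (1 - α i) * |u i| + α i * |∑ j ∈ univ.erase i, u j| := by
        rw [abs_mul, abs_mul, abs_of_nonneg (sub_nonneg.2 h1), abs_of_nonneg h0]
    _ ≤ (1 - α i) * (1 / 2) + α i * ((d - 1) / 2) := by
        gcongr
        exact hu i
    _ = (1 + (d - 2) * α i) / 2 := by ring

lemma piAlpha_apply_ite_neg (v : ℝ) (i : Fin d) :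
    piAlpha α (fun j => if j = i then v else -v) i = (1 + (d - 2) * α i) * v := by
  rw [piAlpha_apply_eq_sub_sum_erase, if_pos rfl,
    sum_congr rfl fun j hj => if_neg (ne_of_mem_erase hj), sum_const, nsmul_eq_mul,
    cast_card_univ_erase]
  ring

lemma image_piAlpha_apply_sub_half_Icc (i : Fin d) (h0 : 0 ≤ α i) (h1 : α i ≤ 1) :
    (fun y => piAlpha α y i - (1 - d * α i) / 2) '' Set.Icc 0 1
      = Set.Icc (-((1 + (d - 2) * α i) / 2)) ((1 + (d - 2) * α i) / 2) := by
  ext t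
  constructor
  · rintro ⟨y, hy, rfl⟩
    rw [Set.mem_Icc, ← abs_le]
    dsimp only
    rw [piAlpha_apply_sub_half]
    exact abs_piAlpha_apply_le α (mem_Icc_zero_one_iff_abs_sub_half_le.1 hy) h0 h1
  · intro ht
    set r := 1 + (d - 2) * α i
    have hr : 0 ≤ r := by linarith [ht.1, ht.2]
    have hv : |t / r| ≤ 1 / 2 := by
      rw [abs_div, abs_of_nonneg hr]
      exact div_le_of_le_mul₀ hr (by norm_num) (by linarith [abs_le.2 ht])
    refine ⟨(fun _ => 1 / 2) + fun j => if j = i then t / r else -(t / r), ?_, ?_⟩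
    · refine mem_Icc_zero_one_iff_abs_sub_half_le.2 fun j => ?_
      simp only [Pi.add_apply, add_sub_cancel_left]
      split_ifs <;> simpa only [abs_neg]
    · simp only [piAlpha_apply_sub_half, add_sub_cancel_left, piAlpha_apply_ite_neg]
      exact mul_div_cancel_of_imp' fun h => by linarith [ht.1, ht.2]

end

lemma pi_norm_eq_apply_of_le {ι : Type*} [Fintype ι] {f : ι → ℝ} (hf : ∀ i, 0 ≤ f i) {i₀ : ι}
    (hi₀ : ∀ i, f i ≤ f i₀) : ‖f‖ = f i₀ :=
  le_antisymm
    ((pi_norm_le_iff_of_nonneg (hf i₀)).2 fun i => (Real.norm_of_nonneg (hf i)).trans_le (hi₀ i))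
    ((Real.le_norm_self _).trans (norm_le_pi_norm f i₀))

lemma sSup_norm_image_of_image_apply_eq_Icc {ι : Type*} [Fintype ι] {S : Set (ι → ℝ)}
    {r : ι → ℝ} (hS : ∀ i, (fun y => y i) '' S = Set.Icc (-r i) (r i)) {i₀ : ι}
    (hr : 0 ≤ r i₀) (hi₀ : ∀ i, r i ≤ r i₀) : sSup (norm '' S) = r i₀ := by
  have hbound : ∀ y ∈ S, ‖y‖ ≤ r i₀ := fun y hy =>
    (pi_norm_le_iff_of_nonneg hr).2 fun i => by
      obtain ⟨hl, hu⟩ := (hS i).subset ⟨y, hy, rfl⟩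
      exact abs_le.2 ⟨by linarith [hi₀ i], hu.trans (hi₀ i)⟩
  obtain ⟨y, hy, hyi₀⟩ : r i₀ ∈ (fun y => y i₀) '' S := hS i₀ ▸ ⟨neg_le_self hr, le_rfl⟩
  refine IsGreatest.csSup_eq ⟨⟨y, hy, ?_⟩, ?_⟩
  · exact (hbound y hy).antisymm (hyi₀ ▸ (Real.le_norm_self _).trans (norm_le_pi_norm y i₀))
  · rintro _ ⟨z, hz, rfl⟩
    exact hbound z hz

theorem central_point_coordinate_intervals_and_sup_general {d : ℕ} (hd : 2 ≤ d)
    (α : Fin d → ℝ) (hα : ∀ i, α i ∈ Set.Ioo (0:ℝ) 1)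
    (x₀ : Fin d → ℝ) (hx₀ : x₀ = fun i => (1 - (d:ℝ) * α i) / 2) :
    (∀ i : Fin d,
      (fun y : Fin d → ℝ => y i - x₀ i) '' (piAlpha α '' Set.Icc (0 : Fin d → ℝ) 1)
        = Set.Icc (-((1 + ((d:ℝ) - 2) * α i) / 2)) ((1 + ((d:ℝ) - 2) * α i) / 2))
    ∧ sSup ((fun y : Fin d → ℝ => ‖y - x₀‖) '' (piAlpha α '' Set.Icc (0 : Fin d → ℝ) 1))
        = (1 + ((d:ℝ) - 2) * ‖α‖) / 2 := by
  subst hx₀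
  have hcoord : ∀ i : Fin d, (fun y : Fin d → ℝ => y i - (1 - d * α i) / 2) ''
      (piAlpha α '' Set.Icc 0 1) = Set.Icc (-((1 + (d - 2) * α i) / 2)) ((1 + (d - 2) * α i) / 2) :=
    fun i => by
      rw [Set.image_image]
      exact image_piAlpha_apply_sub_half_Icc α i (hα i).1.le (hα i).2.le
  refine ⟨hcoord, ?_⟩
  have : Nonempty (Fin d) := ⟨⟨0, by omega⟩⟩
  obtain ⟨i₀, hi₀⟩ := Finite.exists_max α
  have hd2 : (0 : ℝ) ≤ d - 2 := sub_nonneg.2 (by exact_mod_cast hd)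
  rw [pi_norm_eq_apply_of_le (f := α) (fun i => (hα i).1.le) hi₀, ← Set.image_image norm]
  refine sSup_norm_image_of_image_apply_eq_Icc (r := fun i => (1 + (d - 2) * α i) / 2)
    (fun i => ?_) ?_ fun i => ?_
  · rw [Set.image_image]
    exact hcoord i
  · have := (hα i₀).1
    positivity
  · gcongr
    exact hi₀ i

theorem central_point_coordinate_intervals_and_sup {d : ℕ} (hd : 2 ≤ d)
    (α : Fin d → ℝ) (hα : ∀ i, α i ∈ Set.Ioo (0:ℝ) 1) (hsum : ∑ i, α i = 1)
    (x₀ : Fin d → ℝ) (hx₀ : x₀ = fun i => (1 - (d:ℝ) * α i) / 2) :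
    (∀ i : Fin d,
      (fun y : Fin d → ℝ => y i - x₀ i) '' (piAlpha α '' Set.Icc (0 : Fin d → ℝ) 1)
        = Set.Icc (-((1 + ((d:ℝ) - 2) * α i) / 2)) ((1 + ((d:ℝ) - 2) * α i) / 2))
    ∧ sSup ((fun y : Fin d → ℝ => ‖y - x₀‖) '' (piAlpha α '' Set.Icc (0 : Fin d → ℝ) 1))
        = (1 + ((d:ℝ) - 2) * ‖α‖) / 2 :=
  central_point_coordinate_intervals_and_sup_general hd α hα x₀ hx₀
end

section
/- Let (X,T) be a minimal topological dynamical system on a compact metric space X, let W_1, …, W_k be closed subsets covering X with pairwise disjoint interiors, and let F = ∪_i ∂W_i. For n ∈ ℕ let 𝓕_n be the set of connected components of X \ ∪_{j=0}^n T^{−j}(F). If x, y lie in the same element of 𝓕_n, then for every j ∈ {0,…,n}, the points T^j(x) and T^j(y) lie in the interior of the same set W_i. Consequently, if u codes the orbit of a point x₀ with T^n(x₀) ∈ int(W_{u_n}) for all n, then the factor complexity satisfies p_u(n+1) ≤ card 𝓕_n. -/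
/-!
On `S n` the coding of the first `n + 1` steps of an orbit is locally constant: the image under
`T^j` of a connected set avoiding `F` cannot leave the interior of the `W i` it meets, since these
interiors are disjoint open sets covering `Fᶜ`. So every component of `S n` lies in a single
cylinder. Conversely, a factor of `u` occurring at position `s` is the code of a cylinder, an open
set containing `T^s x₀`; it meets `S n`, which is dense as a finite intersection of preimages of
the open dense set `Fᶜ` (boundaries of closed sets are nowhere dense). Choosing a point of `S n`
in each such cylinder injects the factors into the components.
-/

open Set Function

theorem IsOpenMap.iterate {X : Type*} [TopologicalSpace X] {f : X → X} (hf : IsOpenMap f) :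
    ∀ n, IsOpenMap f^[n]
  | 0 => IsOpenMap.id
  | n + 1 => (hf.iterate n).comp hf

section Topology

variable {X ι : Type*} [TopologicalSpace X]

theorem dense_iInter_of_isOpen_of_finite [Finite ι] {f : ι → Set X} (ho : ∀ i, IsOpen (f i))
    (hd : ∀ i, Dense (f i)) : Dense (⋂ i, f i) := by
  rw [← sInter_range]
  exact (finite_range f).dense_sInter (forall_mem_range.2 ho) (forall_mem_range.2 hd)

theorem IsPreconnected.subset_of_pairwise_disjoint {s : Set X} {U : ι → Set X}
    (hs : IsPreconnected s) (hU : ∀ i, IsOpen (U i)) (hdisj : Pairwise (Disjoint on U))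
    (hsU : s ⊆ ⋃ i, U i) {i : ι} (hne : (s ∩ U i).Nonempty) : s ⊆ U i := by
  refine hs.subset_left_of_subset_union (hU i) (isOpen_iUnion fun j : {j // j ≠ i} => hU j)
    (disjoint_iUnion_right.2 fun j => hdisj j.2.symm) (fun z hz => ?_) hne
  obtain ⟨j, hj⟩ := mem_iUnion.1 (hsU hz)
  by_cases hji : j = i
  · exact .inl (hji ▸ hj)
  · exact .inr (mem_iUnion.2 ⟨⟨j, hji⟩, hj⟩)

theorem encard_le_encard_connectedComponentIn {α : Type*} {S : Set X} {c : α → Set X}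
    (hc : Pairwise (Disjoint on c)) {A : Set α} (hA : ∀ a ∈ A, (c a ∩ S).Nonempty)
    (hsat : ∀ a ∈ A, ∀ x ∈ c a ∩ S, connectedComponentIn S x ⊆ c a) :
    A.encard ≤ {C : Set X | ∃ z ∈ S, C = connectedComponentIn S z}.encard := by
  rcases A.eq_empty_or_nonempty with rfl | ⟨a, ha⟩
  · simp
  have : Nonempty X := ⟨(hA a ha).some⟩
  choose! z hz using hA
  refine encard_le_encard_of_injOn (f := fun a => connectedComponentIn S (z a))
    (fun a ha => ⟨z a, (hz a ha).2, rfl⟩) fun a ha b hb hab => ?_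
  replace hab : connectedComponentIn S (z a) = connectedComponentIn S (z b) := hab
  have hzb : z b ∈ c a :=
    hsat a ha _ (hz a ha) (hab ▸ mem_connectedComponentIn (hz b hb).2)
  by_contra hne
  exact (hc hne).le_bot ⟨hzb, (hz b hb).1⟩

end Topology

section Partition

variable {X ι : Type*} [TopologicalSpace X] {W : ι → Set X}

theorem exists_mem_interior_of_notMem_iUnion_frontier (hWcover : ⋃ i, W i = univ) {z : X}
    (hz : z ∉ ⋃ i, frontier (W i)) : ∃ i, z ∈ interior (W i) := by
  obtain ⟨i, hi⟩ := mem_iUnion.1 (hWcover ▸ mem_univ z)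
  exact ⟨i, (mem_interior_iff_notMem_frontier hi).2 fun h => hz (mem_iUnion.2 ⟨i, h⟩)⟩

theorem IsPreconnected.exists_subset_interior {s : Set X} (hs : IsPreconnected s)
    (hne : s.Nonempty) (hWcover : ⋃ i, W i = univ)
    (hWdisj : Pairwise (Disjoint on fun i => interior (W i)))
    (hsF : ∀ z ∈ s, z ∉ ⋃ i, frontier (W i)) : ∃ i, s ⊆ interior (W i) := by
  obtain ⟨x, hx⟩ := hne
  obtain ⟨i, hi⟩ := exists_mem_interior_of_notMem_iUnion_frontier hWcover (hsF x hx)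
  refine ⟨i, hs.subset_of_pairwise_disjoint (fun _ => isOpen_interior) hWdisj
    (fun z hz => mem_iUnion.2 ?_) ⟨x, hx, hi⟩⟩
  exact exists_mem_interior_of_notMem_iUnion_frontier hWcover (hsF z hz)

theorem exists_mem_interior_of_mem_connectedComponentIn {f : X → X} (hf : Continuous f)
    (hWcover : ⋃ i, W i = univ) (hWdisj : Pairwise (Disjoint on fun i => interior (W i)))
    {S : Set X} {x y : X} (hx : x ∈ S) (hy : y ∈ connectedComponentIn S x)
    (hS : ∀ z ∈ S, f z ∉ ⋃ i, frontier (W i)) :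
    ∃ i, f x ∈ interior (W i) ∧ f y ∈ interior (W i) := by
  have hfx : f x ∈ f '' connectedComponentIn S x :=
    mem_image_of_mem f (mem_connectedComponentIn hx)
  obtain ⟨i, hi⟩ :=
    (isPreconnected_connectedComponentIn.image f hf.continuousOn).exists_subset_interior
      ⟨_, hfx⟩ hWcover hWdisj
      (forall_mem_image.2 fun z hz => hS z (connectedComponentIn_subset S x hz))
  exact ⟨i, hi hfx, hi (mem_image_of_mem f hy)⟩

theorem dense_compl_iUnion_frontier [Finite ι] (hWclosed : ∀ i, IsClosed (W i)) :
    Dense (⋃ i, frontier (W i))ᶜ := by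
  rw [compl_iUnion]
  exact dense_iInter_of_isOpen_of_finite (fun _ => isClosed_frontier.isOpen_compl)
    fun i => interior_eq_empty_iff_dense_compl.1 (interior_frontier (hWclosed i))

end Partition

section Coding

variable {X ι : Type*} [TopologicalSpace X] (T : X → X) (W : ι → Set X)

def codingCylinder {m : ℕ} (w : Fin m → ι) : Set X :=
  ⋂ t : Fin m, T^[t] ⁻¹' interior (W (w t))

variable {T W}

theorem isOpen_codingCylinder (hT : Continuous T) {m : ℕ} (w : Fin m → ι) :
    IsOpen (codingCylinder T W w) :=
  isOpen_iInter_of_finite fun t => isOpen_interior.preimage (hT.iterate t)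

theorem pairwise_disjoint_codingCylinder
    (hWdisj : Pairwise (Disjoint on fun i => interior (W i))) (m : ℕ) :
    Pairwise (Disjoint on fun w : Fin m → ι => codingCylinder T W w) := by
  intro w w' hne
  obtain ⟨t, ht⟩ := Function.ne_iff.1 hne
  exact ((hWdisj ht).preimage T^[t]).mono (iInter_subset _ t) (iInter_subset _ t)

theorem iterate_mem_codingCylinder {x₀ : X} {u : ℕ → ι}
    (hu : ∀ n, T^[n] x₀ ∈ interior (W (u n))) (s m : ℕ) :
    T^[s] x₀ ∈ codingCylinder T W fun t : Fin m => u (s + t) :=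
  mem_iInter.2 fun t => by
    rw [mem_preimage, ← iterate_add_apply, add_comm]
    exact hu _

theorem connectedComponentIn_subset_codingCylinder (hT : Continuous T)
    (hWcover : ⋃ i, W i = univ) (hWdisj : Pairwise (Disjoint on fun i => interior (W i)))
    {n : ℕ} {S : Set X} (hS : ∀ z ∈ S, ∀ j ≤ n, T^[j] z ∉ ⋃ i, frontier (W i))
    {w : Fin (n + 1) → ι} {x : X} (hx : x ∈ S) (hxw : x ∈ codingCylinder T W w) :
    connectedComponentIn S x ⊆ codingCylinder T W w := by
  intro y hy
  refine mem_iInter.2 fun t => ?_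
  have ht : (t : ℕ) ≤ n := Nat.lt_succ_iff.1 t.2
  obtain ⟨i, hxi, hyi⟩ := exists_mem_interior_of_mem_connectedComponentIn (hT.iterate t)
    hWcover hWdisj hx hy fun z hz => hS z hz t ht
  have hwi : w t = i := by
    by_contra hne
    exact (hWdisj hne).le_bot ⟨mem_iInter.1 hxw t, hxi⟩
  rwa [mem_preimage, hwi]

theorem dense_setOf_forall_le_iterate_notMem (hT : Continuous T) (hTo : IsOpenMap T)
    {F : Set X} (hF : IsClosed F) (hFd : Dense Fᶜ) (n : ℕ) :
    Dense {z | ∀ j ≤ n, T^[j] z ∉ F} := by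
  have hS : {z | ∀ j ≤ n, T^[j] z ∉ F} = ⋂ j : Iic n, T^[j] ⁻¹' Fᶜ := by
    ext z
    simp
  rw [hS]
  exact dense_iInter_of_isOpen_of_finite
    (fun j => hF.isOpen_compl.preimage (hT.iterate j)) fun j => hFd.preimage (hTo.iterate j)

end Coding

theorem coding_complexity_le_card_components_general {X : Type*} [MetricSpace X]
    (T : X ≃ₜ X)
    {k : ℕ} (W : Fin k → Set X)
    (hWclosed : ∀ i, IsClosed (W i))
    (hWcover : (⋃ i, W i) = Set.univ)
    (hWdisj : ∀ i j, i ≠ j → Disjoint (interior (W i)) (interior (W j)))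
    (F : Set X) (hF : F = ⋃ i, frontier (W i))
    (S : ℕ → Set X) (hS : ∀ n : ℕ, S n = {z : X | ∀ j ≤ n, (⇑T)^[j] z ∉ F}) :
    (∀ n : ℕ, ∀ x ∈ S n, ∀ y ∈ connectedComponentIn (S n) x, ∀ j ≤ n,
        ∃ i : Fin k, (⇑T)^[j] x ∈ interior (W i) ∧ (⇑T)^[j] y ∈ interior (W i))
    ∧ (∀ (x₀ : X) (u : ℕ → Fin k), (∀ n : ℕ, (⇑T)^[n] x₀ ∈ interior (W (u n))) →
        ∀ n : ℕ,
          {w : Fin (n + 1) → Fin k | ∃ s : ℕ, ∀ t : Fin (n + 1), w t = u (s + t.1)}.encard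
            ≤ {Cc : Set X | ∃ z ∈ S n, Cc = connectedComponentIn (S n) z}.encard) := by
  subst hF
  obtain rfl : S = fun n => {z : X | ∀ j ≤ n, T^[j] z ∉ ⋃ i, frontier (W i)} := funext hS
  have hWdisj' : Pairwise (Disjoint on fun i => interior (W i)) := fun i j => hWdisj i j
  refine ⟨fun n x hx y hy j hj => exists_mem_interior_of_mem_connectedComponentIn
    (T.continuous.iterate j) hWcover hWdisj' hx hy fun _ hz => hz j hj, ?_⟩
  intro x₀ u hu n
  refine encard_le_encard_connectedComponentIn (pairwise_disjoint_codingCylinder hWdisj' _) ?_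
    fun w _ x hx => connectedComponentIn_subset_codingCylinder T.continuous hWcover hWdisj'
      (fun _ hz => hz) hx.2 hx.1
  rintro w ⟨s, hw⟩
  have hdense := dense_setOf_forall_le_iterate_notMem T.continuous T.isOpenMap
    (isClosed_iUnion_of_finite fun _ => isClosed_frontier)
    (dense_compl_iUnion_frontier hWclosed) n
  exact hdense.inter_open_nonempty _ (isOpen_codingCylinder T.continuous w)
    ⟨_, funext hw ▸ iterate_mem_codingCylinder hu s (n + 1)⟩

theorem coding_complexity_le_card_components {X : Type*} [MetricSpace X] [CompactSpace X]
    (T : X ≃ₜ X)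
    (hmin : ∀ A : Set X, IsClosed A → (T : X → X) '' A = A → A = ∅ ∨ A = Set.univ)
    {k : ℕ} (W : Fin k → Set X)
    (hWclosed : ∀ i, IsClosed (W i))
    (hWcover : (⋃ i, W i) = Set.univ)
    (hWdisj : ∀ i j, i ≠ j → Disjoint (interior (W i)) (interior (W j)))
    (F : Set X) (hF : F = ⋃ i, frontier (W i))
    (S : ℕ → Set X) (hS : ∀ n : ℕ, S n = {z : X | ∀ j ≤ n, (⇑T)^[j] z ∉ F})
    (hpath : ∀ n : ℕ, ∀ z ∈ S n, IsPathConnected (connectedComponentIn (S n) z)) :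
    (∀ n : ℕ, ∀ x ∈ S n, ∀ y ∈ connectedComponentIn (S n) x, ∀ j ≤ n,
        ∃ i : Fin k, (⇑T)^[j] x ∈ interior (W i) ∧ (⇑T)^[j] y ∈ interior (W i))
    ∧ (∀ (x₀ : X) (u : ℕ → Fin k), (∀ n : ℕ, (⇑T)^[n] x₀ ∈ interior (W (u n))) →
        ∀ n : ℕ,
          {w : Fin (n + 1) → Fin k | ∃ s : ℕ, ∀ t : Fin (n + 1), w t = u (s + t.1)}.encard
            ≤ {Cc : Set X | ∃ z ∈ S n, Cc = connectedComponentIn (S n) z}.encard) :=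
  coding_complexity_le_card_components_general T W hWclosed hWcover hWdisj F hF S hS
end
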